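/- arXiv:1110.5111 — 2 statements merged into one kernel-verified Lean document; each statement's English description precedes it below -/
import Mathlib

section
/- Let G be a connected non-degenerate trigraph and let G' be an optimal antithickening of G with thickening map I. Then for any semiadjacent pair of vertices a, b of G', either |I(a)| = |I(b)| = 1 and the unique vertices of I(a) and I(b) are semiadjacent in G, or (I(a), I(b)) is a square-connected homogeneous pair of strong cliques of G. -/
/-- A trigraph on a vertex type `V`: a symmetric adjacency function with values in
`{1, 0, -1}`, zero on the diagonal, such that semiedges form a matching. -/
structure Trigraph (V : Type) where
  θ : V → V → ℤ
  range_mem : ∀ u v, θ u v = 1 ∨ θ u v = 0 ∨ θ u v = -1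
  symm : ∀ u v, θ u v = θ v u
  refl_zero : ∀ v, θ v v = 0
  semi_matching : ∀ u v w : V, u ≠ v → u ≠ w → v ≠ w → θ u v = 0 → θ u w ≠ 0

namespace Trigraph

variable {V V' V'' : Type}

/-- `u` and `v` are strongly adjacent. -/
def StrongAdj (G : Trigraph V) (u v : V) : Prop := G.θ u v = 1

/-- Distinct `u` and `v` are semiadjacent. -/
def SemiAdj (G : Trigraph V) (u v : V) : Prop := u ≠ v ∧ G.θ u v = 0

/-- Distinct `u` and `v` are adjacent. -/
def Adj (G : Trigraph V) (u v : V) : Prop := u ≠ v ∧ (G.θ u v = 1 ∨ G.θ u v = 0)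

/-- Distinct `u` and `v` are antiadjacent. -/
def AntiAdj (G : Trigraph V) (u v : V) : Prop := u ≠ v ∧ (G.θ u v = 0 ∨ G.θ u v = -1)

/-- `u` and `v` are strongly antiadjacent. -/
def StrongAntiAdj (G : Trigraph V) (u v : V) : Prop := G.θ u v = -1

/-- `X` is strongly complete to `Y`. -/
def StronglyComplete (G : Trigraph V) (X Y : Set V) : Prop :=
  ∀ u ∈ X, ∀ v ∈ Y, G.StrongAdj u v

/-- `X` is strongly anticomplete to `Y`. -/
def StronglyAnticomplete (G : Trigraph V) (X Y : Set V) : Prop :=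
  ∀ u ∈ X, ∀ v ∈ Y, G.StrongAntiAdj u v

/-- A strong clique: pairwise strongly adjacent vertices. -/
def IsStrongClique (G : Trigraph V) (K : Set V) : Prop := K.Pairwise G.StrongAdj

/-- A stable set: pairwise antiadjacent vertices. -/
def IsStableSet (G : Trigraph V) (S : Set V) : Prop := S.Pairwise G.AntiAdj

/-- The neighbourhood of a vertex: the set of vertices adjacent to it. -/
def neighborhood (G : Trigraph V) (v : V) : Set V := {u | G.Adj v u}

/-- Claw-free: no vertex has three pairwise antiadjacent vertices in its neighbourhood. -/
def ClawFree (G : Trigraph V) : Prop :=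
  ¬ ∃ v a b c : V, G.Adj v a ∧ G.Adj v b ∧ G.Adj v c ∧
    G.AntiAdj a b ∧ G.AntiAdj a c ∧ G.AntiAdj b c

/-- Cobipartite: the vertex set is the union of two strong cliques. -/
def Cobipartite (G : Trigraph V) : Prop :=
  ∃ K1 K2 : Set V, G.IsStrongClique K1 ∧ G.IsStrongClique K2 ∧ K1 ∪ K2 = Set.univ

/-- Quasi-line: the neighbourhood of every vertex is the union of two strong cliques. -/
def QuasiLine (G : Trigraph V) : Prop :=
  ∀ v : V, ∃ K1 K2 : Set V, G.IsStrongClique K1 ∧ G.IsStrongClique K2 ∧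
    G.neighborhood v = K1 ∪ K2

/-- Connected: any two vertices are joined by a sequence of consecutively adjacent vertices. -/
def Connected (G : Trigraph V) : Prop :=
  ∀ u v : V, Relation.ReflTransGen G.Adj u v

/-- Non-degenerate: quasi-line and not cobipartite, or claw-free with stability number ≥ 3. -/
def NonDegenerate (G : Trigraph V) : Prop :=
  (G.QuasiLine ∧ ¬ G.Cobipartite) ∨
  (G.ClawFree ∧ ∃ S : Set V, G.IsStableSet S ∧ 3 ≤ S.ncard)

/-- A homogeneous set: `|V| > |X| ≥ 2` and every vertex outside `X` is strongly complete
or strongly anticomplete to `X`. -/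
def HomogeneousSet (G : Trigraph V) (X : Set V) : Prop :=
  2 ≤ X.ncard ∧ X ≠ Set.univ ∧
  ∀ v ∉ X, G.StronglyComplete {v} X ∨ G.StronglyAnticomplete {v} X

/-- `v1 v2 v3 v4` is a square: the pairs `v1v3`, `v2v4` are antiadjacent and the other
four pairs are adjacent. -/
def IsSquare (G : Trigraph V) (v1 v2 v3 v4 : V) : Prop :=
  G.AntiAdj v1 v3 ∧ G.AntiAdj v2 v4 ∧
  G.Adj v1 v2 ∧ G.Adj v2 v3 ∧ G.Adj v3 v4 ∧ G.Adj v4 v1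

/-- `X` contains a square. -/
def HasSquareIn (G : Trigraph V) (X : Set V) : Prop :=
  ∃ v1 v2 v3 v4 : V, G.IsSquare v1 v2 v3 v4 ∧ ({v1, v2, v3, v4} : Set V) ⊆ X

/-- Homogeneous pair of strong cliques `(A, B)`. -/
def HPOSC (G : Trigraph V) (A B : Set V) : Prop :=
  A.Nonempty ∧ B.Nonempty ∧ Disjoint A B ∧
  G.IsStrongClique A ∧ G.IsStrongClique B ∧
  ¬ (∃ a b : V, A = {a} ∧ B = {b}) ∧
  ∀ v ∉ A ∪ B,
    (G.StronglyComplete {v} A ∨ G.StronglyAnticomplete {v} A) ∧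
    (G.StronglyComplete {v} B ∨ G.StronglyAnticomplete {v} B)

/-- Deletion-minimal homogeneous pair of strong cliques. -/
def DeletionMinimal (G : Trigraph V) (A B : Set V) : Prop :=
  G.HPOSC A B ∧ G.HasSquareIn (A ∪ B) ∧
  (∀ a ∈ A, ¬ G.StronglyComplete {a} B ∧ ¬ G.StronglyAnticomplete {a} B) ∧
  (∀ b ∈ B, ¬ G.StronglyComplete {b} A ∧ ¬ G.StronglyAnticomplete {b} A)

/-- There is a square contained in `X` intersecting both `S1` and `S2`. -/
def SquareMeets (G : Trigraph V) (X S1 S2 : Set V) : Prop :=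
  ∃ v1 v2 v3 v4 : V, G.IsSquare v1 v2 v3 v4 ∧ ({v1, v2, v3, v4} : Set V) ⊆ X ∧
    (({v1, v2, v3, v4} : Set V) ∩ S1).Nonempty ∧
    (({v1, v2, v3, v4} : Set V) ∩ S2).Nonempty

/-- Square-connected homogeneous pair of strong cliques. -/
def SquareConnected (G : Trigraph V) (A B : Set V) : Prop :=
  G.HPOSC A B ∧
  (∀ A' A'' : Set V, A'.Nonempty → A''.Nonempty → A' ∪ A'' = A → Disjoint A' A'' →
    G.SquareMeets (A ∪ B) A' A'') ∧
  (∀ B' B'' : Set V, B'.Nonempty → B''.Nonempty → B' ∪ B'' = B → Disjoint B' B'' →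
    G.SquareMeets (A ∪ B) B' B'')

/-- Inclusion-maximal square-connected homogeneous pair of strong cliques. -/
def MaxSquareConnected (G : Trigraph V) (A B : Set V) : Prop :=
  G.SquareConnected A B ∧
  ∀ A' B' : Set V, G.SquareConnected A' B' → A ⊆ A' → B ⊆ B' → A' = A ∧ B' = B

/-- Two homogeneous pairs have skew intersection if a part of one intersects both
parts of the other. -/
def SkewIntersection (A1 B1 A2 B2 : Set V) : Prop :=
  ((A1 ∩ A2).Nonempty ∧ (A1 ∩ B2).Nonempty) ∨
  ((B1 ∩ A2).Nonempty ∧ (B1 ∩ B2).Nonempty) ∨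
  ((A2 ∩ A1).Nonempty ∧ (A2 ∩ B1).Nonempty) ∨
  ((B2 ∩ A1).Nonempty ∧ (B2 ∩ B1).Nonempty)

/-- Laminar: contains no square-connected homogeneous pair of strong cliques. -/
def Laminar (G : Trigraph V) : Prop := ¬ ∃ A B : Set V, G.SquareConnected A B

/-- `G` is a thickening of `G'` via the map `I` (equivalently, `G'` is an antithickening
of `G`): the `I v` are nonempty strong cliques partitioning `V(G)` respecting adjacency. -/
def IsThickening (G : Trigraph V) (G' : Trigraph V') (I : V' → Set V) : Prop :=
  (∀ v : V', (I v).Nonempty ∧ G.IsStrongClique (I v)) ∧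
  (∀ u v : V', u ≠ v → Disjoint (I u) (I v)) ∧
  (⋃ v : V', I v) = Set.univ ∧
  ∀ u v : V', u ≠ v →
    (G'.StrongAdj u v → G.StronglyComplete (I u) (I v)) ∧
    (G'.StrongAntiAdj u v → G.StronglyAnticomplete (I u) (I v)) ∧
    (G'.SemiAdj u v →
      ¬ G.StronglyComplete (I u) (I v) ∧ ¬ G.StronglyAnticomplete (I u) (I v))

/-- `G'` (with thickening map `I`) is an optimal antithickening of `G`: it is a laminar
antithickening with the maximum possible number of vertices. -/
def OptimalAntithickening (G : Trigraph V) (G' : Trigraph V') (I : V' → Set V) : Prop :=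
  G.IsThickening G' I ∧ G'.Laminar ∧
  ∀ (W : Type) (H : Trigraph W) (J : W → Set V),
    G.IsThickening H J → H.Laminar → Nat.card W ≤ Nat.card V'

/-- Isomorphism of trigraphs. -/
def Isomorphic (G1 : Trigraph V) (G2 : Trigraph V') : Prop :=
  ∃ f : V ≃ V', ∀ u v : V, G2.θ (f u) (f v) = G1.θ u v

end Trigraph

/-!
Suppose some partition `(A₁, A₂)` of `I a` is met by no square. If a vertex of `I a` (or of
`I b`) is strongly complete or strongly anticomplete to the other block, it can be split off as
a new vertex of the antithickening. Otherwise every vertex is mixed, and since no square meets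
`A₁` and `A₂`, the neighbourhoods in `I b` of the vertices of `A₁` and of `A₂` are nested; this
yields partitions of `I a` and of `I b` into two blocks, in the pattern "mixed, strongly
complete, strongly anticomplete, mixed", along which both `a` and `b` split. Either way the
refined trigraph has more vertices, and it is still laminar: merging the new vertices back maps
a square-connected homogeneous pair of strong cliques of it onto one of `G'`. This contradicts
optimality.
-/

namespace Trigraph

variable {V V' W : Type}

section Basic

variable {G : Trigraph V} {u v : V} {X Y X' Y' P Q : Set V}

lemma Adj.symm (h : G.Adj u v) : G.Adj v u := ⟨h.1.symm, by rw [G.symm]; exact h.2⟩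

lemma AntiAdj.symm (h : G.AntiAdj u v) : G.AntiAdj v u := ⟨h.1.symm, by rw [G.symm]; exact h.2⟩

lemma SemiAdj.symm (h : G.SemiAdj u v) : G.SemiAdj v u := ⟨h.1.symm, by rw [G.symm]; exact h.2⟩

lemma StrongAdj.symm (h : G.StrongAdj u v) : G.StrongAdj v u := by
  rw [StrongAdj, G.symm]; exact h

lemma StrongAntiAdj.symm (h : G.StrongAntiAdj u v) : G.StrongAntiAdj v u := by
  rw [StrongAntiAdj, G.symm]; exact h

lemma StrongAdj.ne (h : G.StrongAdj u v) : u ≠ v := by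
  rintro rfl
  have := G.refl_zero u
  simp_all [StrongAdj]

lemma AntiAdj.not_strongAdj (h : G.AntiAdj u v) : ¬ G.StrongAdj u v := by
  unfold StrongAdj; rcases h.2 with h | h <;> omega

lemma Adj.not_strongAntiAdj (h : G.Adj u v) : ¬ G.StrongAntiAdj u v := by
  unfold StrongAntiAdj; rcases h.2 with h | h <;> omega

lemma adj_of_not_strongAntiAdj (huv : u ≠ v) (h : ¬ G.StrongAntiAdj u v) : G.Adj u v := by
  unfold StrongAntiAdj at h; rcases G.range_mem u v with h' | h' | h' <;> simp_all [Adj]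

lemma antiAdj_of_not_strongAdj (huv : u ≠ v) (h : ¬ G.StrongAdj u v) : G.AntiAdj u v := by
  unfold StrongAdj at h; rcases G.range_mem u v with h' | h' | h' <;> simp_all [AntiAdj]

lemma StrongAdj.adj (h : G.StrongAdj u v) : G.Adj u v := ⟨h.ne, Or.inl h⟩

lemma StrongAntiAdj.ne (h : G.StrongAntiAdj u v) : u ≠ v := by
  rintro rfl
  have := G.refl_zero u
  simp_all [StrongAntiAdj]

lemma StrongAntiAdj.antiAdj (h : G.StrongAntiAdj u v) : G.AntiAdj u v := ⟨h.ne, Or.inr h⟩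

lemma Adj.strongAdj (h : G.Adj u v) (h0 : G.θ u v ≠ 0) : G.StrongAdj u v :=
  h.2.resolve_right h0

lemma AntiAdj.strongAntiAdj (h : G.AntiAdj u v) (h0 : G.θ u v ≠ 0) : G.StrongAntiAdj u v :=
  h.2.resolve_left h0

lemma SemiAdj.θ_ne_zero {a b c : V} (h : G.SemiAdj a b) (hca : c ≠ a) (hcb : c ≠ b) :
    G.θ a c ≠ 0 :=
  G.semi_matching a b c h.1 hca.symm hcb.symm h.2

lemma SemiAdj.θ_ne_zero_of_mem {a b c x : V} (h : G.SemiAdj a b)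
    (hca : c ≠ a) (hcb : c ≠ b) (hx : x = a ∨ x = b) : G.θ c x ≠ 0 := by
  rw [G.symm]
  rcases hx with rfl | rfl
  · exact h.θ_ne_zero hca hcb
  · exact h.symm.θ_ne_zero hcb hca

lemma IsStrongClique.not_antiAdj {K : Set V} (hK : G.IsStrongClique K) (hu : u ∈ K)
    (hv : v ∈ K) : ¬ G.AntiAdj u v :=
  fun h => h.not_strongAdj (hK hu hv h.1)

lemma StronglyComplete.symm (h : G.StronglyComplete X Y) : G.StronglyComplete Y X :=
  fun y hy x hx => (h x hx y hy).symm

lemma StronglyAnticomplete.symm (h : G.StronglyAnticomplete X Y) :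
    G.StronglyAnticomplete Y X :=
  fun y hy x hx => (h x hx y hy).symm

lemma StronglyComplete.mono (h : G.StronglyComplete X Y) (hX : X' ⊆ X) (hY : Y' ⊆ Y) :
    G.StronglyComplete X' Y' :=
  fun x hx y hy => h x (hX hx) y (hY hy)

lemma StronglyAnticomplete.mono (h : G.StronglyAnticomplete X Y) (hX : X' ⊆ X)
    (hY : Y' ⊆ Y) : G.StronglyAnticomplete X' Y' :=
  fun x hx y hy => h x (hX hx) y (hY hy)

lemma StronglyComplete.not_stronglyAnticomplete (h : G.StronglyComplete X Y)
    (hX : X.Nonempty) (hY : Y.Nonempty) : ¬ G.StronglyAnticomplete X Y := by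
  obtain ⟨x, hx⟩ := hX
  obtain ⟨y, hy⟩ := hY
  intro h'
  have h1 := h x hx y hy
  have h2 := h' x hx y hy
  unfold StrongAdj at h1; unfold StrongAntiAdj at h2; omega

@[simp]
lemma stronglyComplete_singleton_left :
    G.StronglyComplete {u} Y ↔ ∀ v ∈ Y, G.StrongAdj u v := by
  simp [StronglyComplete]

@[simp]
lemma stronglyAnticomplete_singleton_left :
    G.StronglyAnticomplete {u} Y ↔ ∀ v ∈ Y, G.StrongAntiAdj u v := by
  simp [StronglyAnticomplete]

lemma IsSquare.exists_of_subset_union (hP : G.IsStrongClique P) (hQ : G.IsStrongClique Q)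
    {v1 v2 v3 v4 : V} (hsq : G.IsSquare v1 v2 v3 v4)
    (hsub : ({v1, v2, v3, v4} : Set V) ⊆ P ∪ Q) :
    ∃ p1 p2 q1 q2 : V, p1 ∈ P ∧ p2 ∈ P ∧ q1 ∈ Q ∧ q2 ∈ Q ∧ p1 ≠ p2 ∧ q1 ≠ q2 ∧
      G.AntiAdj p1 q1 ∧ G.AntiAdj p2 q2 ∧ G.Adj p1 q2 ∧ G.Adj p2 q1 ∧
      ({v1, v2, v3, v4} : Set V) = {p1, p2, q1, q2} := by
  obtain ⟨h13, h24, h12, h23, h34, h41⟩ := hsq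
  have m1 : v1 ∈ P ∪ Q := hsub (by simp)
  have m2 : v2 ∈ P ∪ Q := hsub (by simp)
  have m3 : v3 ∈ P ∪ Q := hsub (by simp)
  have m4 : v4 ∈ P ∪ Q := hsub (by simp)
  have opp : ∀ {K K' : Set V} {x y : V}, G.IsStrongClique K → G.AntiAdj x y → x ∈ K →
      y ∈ K ∪ K' → y ∈ K' := fun hK hxy hx hy =>
    hy.resolve_left fun h => hK.not_antiAdj hx h hxy
  have opp' : ∀ {K K' : Set V} {x y : V}, G.IsStrongClique K' → G.AntiAdj x y → x ∈ K' →
      y ∈ K ∪ K' → y ∈ K := fun hK hxy hx hy =>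
    hy.resolve_right fun h => hK.not_antiAdj hx h hxy
  rcases m1 with h1 | h1 <;> rcases m2 with h2 | h2
  · exact ⟨v1, v2, v3, v4, h1, h2, opp hP h13 h1 m3, opp hP h24 h2 m4, h12.1, h34.1, h13, h24,
      h41.symm, h23, rfl⟩
  · exact ⟨v1, v4, v3, v2, h1, opp' hQ h24 h2 m4, opp hP h13 h1 m3, h2, h41.1.symm,
      h23.1.symm, h13, h24.symm, h12, h34.symm,
      by ext; simp only [Set.mem_insert_iff, Set.mem_singleton_iff]; tauto⟩
  · exact ⟨v3, v2, v1, v4, opp' hQ h13 h1 m3, h2, h1, opp hP h24 h2 m4, h23.1.symm,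
      h41.1.symm, h13.symm, h24, h34, h12.symm,
      by ext; simp only [Set.mem_insert_iff, Set.mem_singleton_iff]; tauto⟩
  · exact ⟨v3, v4, v1, v2, opp' hQ h13 h1 m3, opp' hQ h24 h2 m4, h1, h2, h34.1, h12.1,
      h13.symm, h24.symm, h23.symm, h41,
      by ext; simp only [Set.mem_insert_iff, Set.mem_singleton_iff]; tauto⟩

/-- Strongly adjacent vertices of a square form a side of it. -/
lemma IsSquare.distinguishes {v1 v2 v3 v4 z : V} (hsq : G.IsSquare v1 v2 v3 v4)
    (hu : u ∈ ({v1, v2, v3, v4} : Set V)) (hv : v ∈ ({v1, v2, v3, v4} : Set V))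
    (hz : z ∈ ({v1, v2, v3, v4} : Set V)) (huv : G.StrongAdj u v) (hzu : z ≠ u)
    (hzv : z ≠ v) :
    (G.Adj z u ∧ G.AntiAdj z v) ∨ (G.AntiAdj z u ∧ G.Adj z v) := by
  obtain ⟨h13, h24, h12, h23, h34, h41⟩ := hsq
  have := huv.ne
  have := h13.not_strongAdj; have := h13.symm.not_strongAdj
  have := h24.not_strongAdj; have := h24.symm.not_strongAdj
  have := h13.symm; have := h24.symm; have := h12.symm; have := h23.symm
  have := h34.symm; have := h41.symm
  simp only [Set.mem_insert_iff, Set.mem_singleton_iff] at hu hv hz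
  rcases hu with rfl | rfl | rfl | rfl <;> rcases hv with rfl | rfl | rfl | rfl <;>
    rcases hz with rfl | rfl | rfl | rfl <;> tauto

lemma SquareMeets.mono {X S T S' T' : Set V} (h : G.SquareMeets X S T) (hS : S ⊆ S')
    (hT : T ⊆ T') : G.SquareMeets X S' T' := by
  obtain ⟨v1, v2, v3, v4, hsq, hsub, hmS, hmT⟩ := h
  exact ⟨v1, v2, v3, v4, hsq, hsub, hmS.mono (Set.inter_subset_inter_right _ hS),
    hmT.mono (Set.inter_subset_inter_right _ hT)⟩

lemma preimage_partition {μ : W → V'} {R : Set W} {X₁ X₂ : Set V'} (h₁ : X₁.Nonempty)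
    (h₂ : X₂.Nonempty) (hu : X₁ ∪ X₂ = μ '' R) (hd : Disjoint X₁ X₂) :
    (R ∩ μ ⁻¹' X₁).Nonempty ∧ (R ∩ μ ⁻¹' X₂).Nonempty ∧
      (R ∩ μ ⁻¹' X₁) ∪ (R ∩ μ ⁻¹' X₂) = R ∧ Disjoint (R ∩ μ ⁻¹' X₁) (R ∩ μ ⁻¹' X₂) := by
  have hsub : ∀ {X}, X ⊆ μ '' R → X.Nonempty → (R ∩ μ ⁻¹' X).Nonempty := by
    rintro X hX ⟨c, hc⟩
    obtain ⟨w, hw, rfl⟩ := hX hc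
    exact ⟨w, hw, hc⟩
  refine ⟨hsub (hu ▸ Set.subset_union_left) h₁, hsub (hu ▸ Set.subset_union_right) h₂, ?_,
    (hd.preimage μ).mono Set.inter_subset_right Set.inter_subset_right⟩
  rw [← Set.inter_union_distrib_left, ← Set.preimage_union, hu]
  exact Set.inter_eq_left.2 (Set.subset_preimage_image μ R)

end Basic

section SquareConnected

variable {G : Trigraph V} {P Q : Set V}

lemma HPOSC.disjoint (h : G.HPOSC P Q) : Disjoint P Q := h.2.2.1

lemma HPOSC.isStrongClique_left (h : G.HPOSC P Q) : G.IsStrongClique P := h.2.2.2.1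

lemma HPOSC.isStrongClique_right (h : G.HPOSC P Q) : G.IsStrongClique Q := h.2.2.2.2.1

lemma HPOSC.pure (h : G.HPOSC P Q) {v : V} (hv : v ∉ P ∪ Q) :
    (G.StronglyComplete {v} P ∨ G.StronglyAnticomplete {v} P) ∧
      (G.StronglyComplete {v} Q ∨ G.StronglyAnticomplete {v} Q) :=
  h.2.2.2.2.2.2 v hv

lemma HPOSC.symm (h : G.HPOSC P Q) : G.HPOSC Q P := by
  obtain ⟨hP, hQ, hPQ, hPc, hQc, hns, hhom⟩ := h
  refine ⟨hQ, hP, hPQ.symm, hQc, hPc, fun ⟨x, y, hx, hy⟩ => hns ⟨y, x, hy, hx⟩, fun v hv => ?_⟩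
  rw [Set.union_comm] at hv
  exact (hhom v hv).symm

lemma SquareConnected.symm (h : G.SquareConnected P Q) : G.SquareConnected Q P := by
  refine ⟨h.1.symm, fun Q' Q'' h1 h2 h3 h4 => ?_, fun P' P'' h1 h2 h3 h4 => ?_⟩
  · rw [Set.union_comm]; exact h.2.2 Q' Q'' h1 h2 h3 h4
  · rw [Set.union_comm]; exact h.2.1 P' P'' h1 h2 h3 h4

lemma SquareConnected.squareMeets_singleton (h : G.SquareConnected P Q) {x x' : V}
    (hx : x ∈ P) (hx' : x' ∈ P) (hne : x' ≠ x) : G.SquareMeets (P ∪ Q) {x} (P \ {x}) :=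
  h.2.1 _ _ (Set.singleton_nonempty x) ⟨x', hx', hne⟩
    (by rw [Set.singleton_union, Set.insert_sdiff_singleton, Set.insert_eq_of_mem hx])
    Set.disjoint_sdiff_right

lemma SquareConnected.hasSquareIn (h : G.SquareConnected P Q) : G.HasSquareIn (P ∪ Q) := by
  have key : ∀ {X S T : Set V}, G.SquareMeets X S T → G.HasSquareIn X :=
    fun ⟨v1, v2, v3, v4, hsq, hsub, _⟩ => ⟨v1, v2, v3, v4, hsq, hsub⟩
  by_contra hno
  obtain ⟨⟨p, hp⟩, ⟨q, hq⟩, -, -, -, hns, -⟩ := h.1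
  refine hns ⟨p, q, ?_, ?_⟩
  · refine Set.eq_singleton_iff_unique_mem.2 ⟨hp, fun p' hp' => ?_⟩
    by_contra hne
    exact hno (key (h.squareMeets_singleton hp hp' hne))
  · refine Set.eq_singleton_iff_unique_mem.2 ⟨hq, fun q' hq' => ?_⟩
    by_contra hne
    exact hno (Set.union_comm Q P ▸ key (h.symm.squareMeets_singleton hq hq' hne))

lemma SquareConnected.nontrivial_left (h : G.SquareConnected P Q) : P.Nontrivial := by
  obtain ⟨v1, v2, v3, v4, hsq, hsub⟩ := h.hasSquareIn
  obtain ⟨p1, p2, -, -, hp1, hp2, -, -, hne, -⟩ :=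
    hsq.exists_of_subset_union h.1.isStrongClique_left h.1.isStrongClique_right hsub
  exact ⟨p1, hp1, p2, hp2, hne⟩

/-- `x` lies in a square of the pair. -/
lemma SquareConnected.exists_antiAdj_adj (h : G.SquareConnected P Q) {x : V} (hx : x ∈ P) :
    (∃ q ∈ Q, G.AntiAdj x q) ∧ ∃ q ∈ Q, G.Adj x q := by
  obtain ⟨x', hx', hne⟩ := h.nontrivial_left.exists_ne x
  obtain ⟨v1, v2, v3, v4, hsq, hsub, ⟨y, hyS, rfl⟩, -⟩ := h.squareMeets_singleton hx hx' hne
  obtain ⟨p1, p2, q1, q2, -, -, hq1, hq2, -, -, ha1, ha2, hd1, hd2, hS⟩ :=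
    hsq.exists_of_subset_union h.1.isStrongClique_left h.1.isStrongClique_right hsub
  rw [hS] at hyS
  simp only [Set.mem_insert_iff, Set.mem_singleton_iff] at hyS
  rcases hyS with rfl | rfl | rfl | rfl
  · exact ⟨⟨q1, hq1, ha1⟩, q2, hq2, hd1⟩
  · exact ⟨⟨q2, hq2, ha2⟩, q1, hq1, hd2⟩
  · exact absurd rfl (h.1.disjoint.ne_of_mem hx hq1)
  · exact absurd rfl (h.1.disjoint.ne_of_mem hx hq2)

lemma not_hasSquareIn_of_pure (hP : G.IsStrongClique P) (hQ : G.IsStrongClique Q)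
    (hpure : ∀ q ∈ Q, G.StronglyComplete {q} P ∨ G.StronglyAnticomplete {q} P) :
    ¬ G.HasSquareIn (P ∪ Q) := by
  rintro ⟨v1, v2, v3, v4, hsq, hsub⟩
  obtain ⟨p1, p2, q1, -, hp1, hp2, hq1, -, -, -, ha, -, -, hd, -⟩ :=
    hsq.exists_of_subset_union hP hQ hsub
  rcases hpure q1 hq1 with hc | hc
  · exact ha.symm.not_strongAdj (hc q1 rfl p1 hp1)
  · exact hd.symm.not_strongAntiAdj (hc q1 rfl p2 hp2)

end SquareConnected

/-- `H` arises from `G'` by replacing the semiadjacent vertices `a`, `b` by the fibres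
`μ ⁻¹' {a}`, `μ ⁻¹' {b}`, every other ("outer") vertex being kept; the last three fields restrict
how the two fibres may see each other. -/
structure IsSplitting (G' : Trigraph V') (a b : V') (H : Trigraph W) (μ : W → V') : Prop where
  semiAdj : G'.SemiAdj a b
  surjective : Function.Surjective μ
  eq_of_outer : ∀ u v, μ u = μ v → μ u ≠ a → μ u ≠ b → u = v
  θ_eq : ∀ u v, μ u ≠ μ v → ¬ ((μ u = a ∨ μ u = b) ∧ (μ v = a ∨ μ v = b)) →
    H.θ u v = G'.θ (μ u) (μ v)
  strongAdj_of_eq : ∀ u v, u ≠ v → μ u = μ v → H.StrongAdj u v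
  mixed : ∀ y, μ y = b →
    (∃ x, μ x = a ∧ ¬ H.StrongAdj x y) ∧ ∃ x, μ x = a ∧ ¬ H.StrongAntiAdj x y
  not_strongAdj_strongAdj : ∀ x x' y y', μ x = a → μ x' = a → μ y = b → μ y' = b →
    x ≠ x' → y ≠ y' → ¬ (H.StrongAdj x y ∧ H.StrongAdj x' y')
  not_strongAntiAdj_strongAntiAdj : ∀ x x' y y', μ x = a → μ x' = a → μ y = b →
    μ y' = b → x ≠ x' → y ≠ y' → ¬ (H.StrongAntiAdj x y ∧ H.StrongAntiAdj x' y')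

namespace IsSplitting

variable {G' : Trigraph V'} {a b : V'} {H : Trigraph W} {μ : W → V'} {P Q : Set W}
  {u v x y z : W}

lemma θ_eq_of_outer (hs : IsSplitting G' a b H μ) (hza : μ z ≠ a) (hzb : μ z ≠ b)
    (hu : μ u = a ∨ μ u = b) : H.θ z u = G'.θ (μ z) (μ u) ∧ G'.θ (μ z) (μ u) ≠ 0 := by
  refine ⟨hs.θ_eq z u ?_ (fun h => h.1.elim hza hzb), hs.semiAdj.θ_ne_zero_of_mem hza hzb hu⟩
  rcases hu with hu | hu <;> rw [hu] <;> assumption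

lemma not_adj_antiAdj_of_outer (hs : IsSplitting G' a b H μ) (hza : μ z ≠ a) (hzb : μ z ≠ b)
    (hu : μ u = a ∨ μ u = b) (huv : μ u = μ v) : ¬ (H.Adj z u ∧ H.AntiAdj z v) := by
  rintro ⟨h1, h2⟩
  obtain ⟨eu, hne⟩ := hs.θ_eq_of_outer hza hzb hu
  obtain ⟨ev, -⟩ := hs.θ_eq_of_outer hza hzb (huv ▸ hu)
  rw [← huv] at ev
  have := h1.2
  have := h2.2
  omega

lemma θ_eq_or_eq_zero (hs : IsSplitting G' a b H μ) (huv : μ u ≠ μ v) :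
    G'.θ (μ u) (μ v) = 0 ∨ H.θ u v = G'.θ (μ u) (μ v) := by
  by_cases hsp : (μ u = a ∨ μ u = b) ∧ (μ v = a ∨ μ v = b)
  · left
    obtain ⟨hu | hu, hv | hv⟩ := hsp <;> rw [hu, hv] at huv ⊢
    · exact absurd rfl huv
    · exact hs.semiAdj.2
    · exact hs.semiAdj.symm.2
    · exact absurd rfl huv
  · exact Or.inr (hs.θ_eq u v huv hsp)

lemma adj_map (hs : IsSplitting G' a b H μ) (huv : μ u ≠ μ v) (h : H.Adj u v) :
    G'.Adj (μ u) (μ v) := by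
  refine ⟨huv, ?_⟩
  rcases hs.θ_eq_or_eq_zero huv with h0 | e
  · exact Or.inr h0
  · rw [← e]; exact h.2

lemma antiAdj_map (hs : IsSplitting G' a b H μ) (huv : μ u ≠ μ v) (h : H.AntiAdj u v) :
    G'.AntiAdj (μ u) (μ v) := by
  refine ⟨huv, ?_⟩
  rcases hs.θ_eq_or_eq_zero huv with h0 | e
  · exact Or.inl h0
  · rw [← e]; exact h.2

/-- By the matching condition, such a square would contain two disjoint strongly adjacent, or
two disjoint strongly antiadjacent, pairs. -/
lemma not_square_between_fibres (hs : IsSplitting G' a b H μ) {p₁ p₂ q₁ q₂ : W}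
    (hp₁ : μ p₁ = a) (hp₂ : μ p₂ = a) (hq₁ : μ q₁ = b) (hq₂ : μ q₂ = b) (hp : p₁ ≠ p₂)
    (hq : q₁ ≠ q₂) (ha₁ : H.AntiAdj p₁ q₁) (ha₂ : H.AntiAdj p₂ q₂) (hd₁ : H.Adj p₁ q₂)
    (hd₂ : H.Adj p₂ q₁) : False := by
  have hcross : H.StrongAdj p₁ q₂ ∧ H.StrongAdj p₂ q₁ → False :=
    hs.not_strongAdj_strongAdj p₁ p₂ q₂ q₁ hp₁ hp₂ hq₂ hq₁ hp hq.symm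
  by_cases h₁ : H.θ p₁ q₁ = 0
  · refine hcross ⟨hd₁.strongAdj ?_, hd₂.strongAdj ?_⟩
    · exact H.semi_matching p₁ q₁ q₂ ha₁.1 hd₁.1 hq h₁
    · rw [H.symm]
      exact H.semi_matching q₁ p₁ p₂ ha₁.1.symm hd₂.1.symm hp (by rw [H.symm]; exact h₁)
  by_cases h₂ : H.θ p₂ q₂ = 0
  · refine hcross ⟨hd₁.strongAdj ?_, hd₂.strongAdj ?_⟩
    · rw [H.symm]
      exact H.semi_matching q₂ p₂ p₁ ha₂.1.symm hd₁.1.symm hp.symm (by rw [H.symm]; exact h₂)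
    · exact H.semi_matching p₂ q₂ q₁ ha₂.1 hd₂.1 hq.symm h₂
  exact hs.not_strongAntiAdj_strongAntiAdj p₁ p₂ q₁ q₂ hp₁ hp₂ hq₁ hq₂ hp hq
    ⟨ha₁.strongAntiAdj h₁, ha₂.strongAntiAdj h₂⟩

lemma injOn_square (hs : IsSplitting G' a b H μ) {v₁ v₂ v₃ v₄ : W}
    (hsq : H.IsSquare v₁ v₂ v₃ v₄) (hu : u ∈ ({v₁, v₂, v₃, v₄} : Set W))
    (hv : v ∈ ({v₁, v₂, v₃, v₄} : Set W)) (huv : u ≠ v) : μ u ≠ μ v := by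
  intro he
  have hsp : μ u = a ∨ μ u = b := by
    by_contra! h
    exact huv (hs.eq_of_outer u v he h.1 h.2)
  have hadj : H.StrongAdj u v := hs.strongAdj_of_eq u v huv he
  -- every vertex of the square is adjacent to exactly one of `u`, `v`, so it is not outer
  have hall : ({v₁, v₂, v₃, v₄} : Set W) ⊆ {w | μ w = a} ∪ {w | μ w = b} := by
    intro w hw
    by_cases hwu : w = u
    · exact hwu ▸ hsp
    by_cases hwv : w = v
    · subst hwv; rw [he] at hsp; exact hsp
    by_contra hout
    replace hout : μ w ≠ a ∧ μ w ≠ b := not_or.1 hout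
    rcases hsq.distinguishes hu hv hw hadj hwu hwv with h | h
    · exact hs.not_adj_antiAdj_of_outer hout.1 hout.2 hsp he h
    · exact hs.not_adj_antiAdj_of_outer hout.1 hout.2 (he ▸ hsp) he.symm ⟨h.2, h.1⟩
  have hcl : ∀ c, H.IsStrongClique {w | μ w = c} := fun c _ hx _ hy hxy =>
    hs.strongAdj_of_eq _ _ hxy (hx.trans hy.symm)
  obtain ⟨p₁, p₂, q₁, q₂, hp₁, hp₂, hq₁, hq₂, hp, hq, ha₁, ha₂, hd₁, hd₂, -⟩ :=
    hsq.exists_of_subset_union (hcl a) (hcl b) hall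
  exact hs.not_square_between_fibres hp₁ hp₂ hq₁ hq₂ hp hq ha₁ ha₂ hd₁ hd₂

lemma isSquare_map (hs : IsSplitting G' a b H μ) {v₁ v₂ v₃ v₄ : W}
    (hsq : H.IsSquare v₁ v₂ v₃ v₄) : G'.IsSquare (μ v₁) (μ v₂) (μ v₃) (μ v₄) := by
  have hne : ∀ {u v}, u ∈ ({v₁, v₂, v₃, v₄} : Set W) → v ∈ ({v₁, v₂, v₃, v₄} : Set W) →
      u ≠ v → μ u ≠ μ v := hs.injOn_square hsq
  obtain ⟨h13, h24, h12, h23, h34, h41⟩ := hsq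
  exact ⟨hs.antiAdj_map (hne (by simp) (by simp) h13.1) h13,
    hs.antiAdj_map (hne (by simp) (by simp) h24.1) h24,
    hs.adj_map (hne (by simp) (by simp) h12.1) h12, hs.adj_map (hne (by simp) (by simp) h23.1) h23,
    hs.adj_map (hne (by simp) (by simp) h34.1) h34, hs.adj_map (hne (by simp) (by simp) h41.1) h41⟩

lemma squareMeets_map (hs : IsSplitting G' a b H μ) {X S T : Set W}
    (h : H.SquareMeets X S T) : G'.SquareMeets (μ '' X) (μ '' S) (μ '' T) := by
  obtain ⟨v₁, v₂, v₃, v₄, hsq, hsub, ⟨s, hsS, hs'⟩, ⟨t, htS, ht⟩⟩ := h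
  have himg : ∀ {w}, w ∈ ({v₁, v₂, v₃, v₄} : Set W) →
      μ w ∈ ({μ v₁, μ v₂, μ v₃, μ v₄} : Set V') := by
    intro w hw
    simp only [Set.mem_insert_iff, Set.mem_singleton_iff] at hw ⊢
    rcases hw with rfl | rfl | rfl | rfl <;> simp
  refine ⟨μ v₁, μ v₂, μ v₃, μ v₄, hs.isSquare_map hsq, ?_, ⟨μ s, himg hsS, s, hs', rfl⟩,
    ⟨μ t, himg htS, t, ht, rfl⟩⟩
  intro c hc
  simp only [Set.mem_insert_iff, Set.mem_singleton_iff] at hc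
  rcases hc with rfl | rfl | rfl | rfl <;> exact ⟨_, hsub (by simp), rfl⟩

lemma exists_strongAdj_of_fibre_meets_both (hs : IsSplitting G' a b H μ)
    (h : H.SquareConnected P Q) (hu : u ∈ P) (hv : v ∈ Q) (huv : μ u = μ v)
    (hsp : μ u = a ∨ μ u = b) :
    ∃ q ∈ Q, (μ q = a ∨ μ q = b) ∧ μ q ≠ μ u ∧ H.StrongAdj v q := by
  have hne : u ≠ v := h.1.disjoint.ne_of_mem hu hv
  obtain ⟨⟨q, hq, hanti⟩, -⟩ := h.exists_antiAdj_adj hu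
  have hqv : v ≠ q := fun e => hanti.not_strongAdj (e ▸ hs.strongAdj_of_eq u v hne huv)
  have hvq : H.StrongAdj v q := h.1.isStrongClique_right hv hq hqv
  have hqsp : μ q = a ∨ μ q = b := by
    by_contra! hout
    exact hs.not_adj_antiAdj_of_outer hout.1 hout.2 (huv ▸ hsp) huv.symm
      ⟨hvq.symm.adj, hanti.symm⟩
  refine ⟨q, hq, hqsp, fun e => ?_, hvq⟩
  exact hanti.not_strongAdj (hs.strongAdj_of_eq u q hanti.1 e.symm)

lemma not_fibre_meets_both (hs : IsSplitting G' a b H μ) (h : H.SquareConnected P Q)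
    (hu : u ∈ P) (hv : v ∈ Q) (huv : μ u = μ v) : False := by
  have hne : u ≠ v := h.1.disjoint.ne_of_mem hu hv
  have hsp : μ u = a ∨ μ u = b := by
    by_contra! h
    exact hne (hs.eq_of_outer u v huv h.1 h.2)
  obtain ⟨q, hq, hqsp, hqu, hvq⟩ := hs.exists_strongAdj_of_fibre_meets_both h hu hv huv hsp
  obtain ⟨p, hp, hpsp, hpv, hup⟩ :=
    hs.exists_strongAdj_of_fibre_meets_both h.symm hv hu huv.symm (huv ▸ hsp)
  have hpq : p ≠ q := h.1.disjoint.ne_of_mem hp hq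
  have hab := hs.semiAdj.1
  rcases hsp with ha | hb
  · have hpb : μ p = b := hpsp.resolve_left (by rwa [← huv, ha] at hpv)
    have hqb : μ q = b := hqsp.resolve_left (by rwa [ha] at hqu)
    exact hs.not_strongAdj_strongAdj u v p q ha (huv ▸ ha) hpb hqb hne hpq ⟨hup, hvq⟩
  · have hpa : μ p = a := hpsp.resolve_right (by rwa [← huv, hb] at hpv)
    have hqa : μ q = a := hqsp.resolve_right (by rwa [hb] at hqu)
    exact hs.not_strongAdj_strongAdj p q u v hpa hqa hb (huv ▸ hb) hpq hne
      ⟨hup.symm, hvq.symm⟩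

lemma not_mem_both_fibres (hs : IsSplitting G' a b H μ) (h : H.SquareConnected P Q)
    (hx : x ∈ P) (hy : y ∈ P) (hxa : μ x = a) (hyb : μ y = b) : False := by
  obtain ⟨⟨x', hx'a, hx'y⟩, -⟩ := hs.mixed y hyb
  have hx'x : x' ≠ x → H.StrongAdj x' x := fun hne =>
    hs.strongAdj_of_eq x' x hne (by rw [hxa, hx'a])
  by_cases hx'P : x' ∈ P
  · exact hx'y (h.1.isStrongClique_left hx'P hy fun e => hs.semiAdj.1 (by rw [← hx'a, ← hyb, e]))
  by_cases hx'Q : x' ∈ Q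
  · exact hs.not_fibre_meets_both h hx hx'Q (by rw [hxa, hx'a])
  rcases h.1.pure (by rintro (h | h) <;> contradiction) |>.1 with hc | hc
  · exact hx'y (hc x' rfl y hy)
  · exact (hx'x fun e => hx'P (e ▸ hx)).symm.adj.not_strongAntiAdj (hc x' rfl x hx).symm

lemma mem_fibre_b_of_mem_fibre_a_left (hs : IsSplitting G' a b H μ)
    (h : H.SquareConnected P Q) (hx : x ∈ P) (hxa : μ x = a) : ∃ y ∈ P ∪ Q, μ y = b := by
  by_contra! hnb
  obtain ⟨y, hyb⟩ := hs.surjective b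
  have hy : y ∉ P ∪ Q := fun hy => hnb y hy hyb
  have hhom := h.1.pure hy
  -- `y` is pure to `P` but mixed on the fibre of `a`, so this fibre leaves `P ∪ Q`
  obtain ⟨x'', hx''a, hx''P, hx''Q⟩ : ∃ x'', μ x'' = a ∧ x'' ∉ P ∧ x'' ∉ Q := by
    obtain ⟨⟨x₁, hx₁a, hx₁y⟩, ⟨x₂, hx₂a, hx₂y⟩⟩ := hs.mixed y hyb
    have hnQ : ∀ {w}, μ w = a → w ∉ Q := fun hw hwQ =>
      hs.not_fibre_meets_both h hx hwQ (by rw [hxa, hw])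
    by_cases hx₁P : x₁ ∈ P
    · by_cases hx₂P : x₂ ∈ P
      · rcases hhom.1 with hc | hc
        · exact absurd (hc y rfl x₁ hx₁P).symm hx₁y
        · exact absurd (hc y rfl x₂ hx₂P).symm hx₂y
      · exact ⟨x₂, hx₂a, hx₂P, hnQ hx₂a⟩
    · exact ⟨x₁, hx₁a, hx₁P, hnQ hx₁a⟩
  have hout : ∀ q ∈ Q, μ q ≠ a ∧ μ q ≠ b := fun q hq =>
    ⟨fun e => hs.not_fibre_meets_both h hx hq (by rw [hxa, e]), fun e => hnb q (Or.inr hq) e⟩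
  have hsp : μ x'' = a ∨ μ x'' = b := Or.inl hx''a
  have he : μ x'' = μ x := by rw [hx''a, hxa]
  obtain ⟨⟨q, hq, hanti⟩, ⟨q', hq', hadj⟩⟩ := h.exists_antiAdj_adj hx
  rcases (h.1.pure (by rintro (h | h) <;> contradiction)).2 with hc | hc
  · exact hs.not_adj_antiAdj_of_outer (hout q hq).1 (hout q hq).2 hsp he
      ⟨(hc x'' rfl q hq).symm.adj, hanti.symm⟩
  · exact hs.not_adj_antiAdj_of_outer (hout q' hq').1 (hout q' hq').2 (he ▸ hsp) he.symm
      ⟨hadj.symm, (hc x'' rfl q' hq').symm.antiAdj⟩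

lemma mem_fibre_b_of_mem_fibre_a (hs : IsSplitting G' a b H μ) (h : H.SquareConnected P Q)
    (hx : x ∈ P ∪ Q) (hxa : μ x = a) : ∃ y ∈ P ∪ Q, μ y = b := by
  rcases hx with hx | hx
  · exact hs.mem_fibre_b_of_mem_fibre_a_left h hx hxa
  · rw [Set.union_comm]
    exact hs.mem_fibre_b_of_mem_fibre_a_left h.symm hx hxa

lemma mem_fibre_a_of_mem_fibre_b_left (hs : IsSplitting G' a b H μ)
    (h : H.SquareConnected P Q) (hy : y ∈ P) (hyb : μ y = b) : ∃ x ∈ P ∪ Q, μ x = a := by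
  by_contra! hna
  obtain ⟨⟨x₁, hx₁a, hx₁y⟩, ⟨x₂, hx₂a, hx₂y⟩⟩ := hs.mixed y hyb
  have hhom : ∀ {w}, μ w = a → H.StronglyComplete {w} P ∨ H.StronglyAnticomplete {w} P :=
    fun hw => (h.1.pure fun hwPQ => hna _ hwPQ hw).1
  -- `x₁` is strongly anticomplete and `x₂` strongly complete to `P`, so `P` lies in the fibre
  -- of `b`, to which every vertex of `Q` is strongly complete or anticomplete
  have hx₁P : H.StronglyAnticomplete {x₁} P :=
    (hhom hx₁a).resolve_left fun hc => hx₁y (hc x₁ rfl y hy)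
  have hx₂P : H.StronglyComplete {x₂} P :=
    (hhom hx₂a).resolve_right fun hc => hx₂y (hc x₂ rfl y hy)
  have hPb : ∀ p ∈ P, μ p = b := by
    intro p hp
    by_contra hpb
    exact hs.not_adj_antiAdj_of_outer (fun e => hna p (Or.inl hp) e) hpb (Or.inl hx₂a)
      (by rw [hx₂a, hx₁a]) ⟨(hx₂P x₂ rfl p hp).symm.adj, (hx₁P x₁ rfl p hp).symm.antiAdj⟩
  refine not_hasSquareIn_of_pure h.1.isStrongClique_left h.1.isStrongClique_right
    (fun q hq => ?_) h.hasSquareIn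
  by_cases hqb : μ q = b
  · exact Or.inl fun _ hq' p hp => hq' ▸ hs.strongAdj_of_eq q p
      (h.1.disjoint.ne_of_mem hp hq).symm (by rw [hqb, hPb p hp])
  have hqa : μ q ≠ a := fun e => hna q (Or.inr hq) e
  have hθ : ∀ p ∈ P, H.θ q p = G'.θ (μ q) b := fun p hp => by
    rw [← hPb p hp]; exact (hs.θ_eq_of_outer hqa hqb (Or.inr (hPb p hp))).1
  rcases G'.range_mem (μ q) b with e | e | e
  · exact Or.inl fun _ hq' p hp => hq' ▸ (hθ p hp).trans e
  · obtain ⟨y₀, hy₀⟩ := h.1.1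
    exact absurd e (hPb y₀ hy₀ ▸ (hs.θ_eq_of_outer hqa hqb (Or.inr (hPb y₀ hy₀))).2)
  · exact Or.inr fun _ hq' p hp => hq' ▸ (hθ p hp).trans e

lemma mem_fibre_a_of_mem_fibre_b (hs : IsSplitting G' a b H μ) (h : H.SquareConnected P Q)
    (hy : y ∈ P ∪ Q) (hyb : μ y = b) : ∃ x ∈ P ∪ Q, μ x = a := by
  rcases hy with hy | hy
  · exact hs.mem_fibre_a_of_mem_fibre_b_left h hy hyb
  · rw [Set.union_comm]
    exact hs.mem_fibre_a_of_mem_fibre_b_left h.symm hy hyb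

lemma isStrongClique_image (hs : IsSplitting G' a b H μ) (h : H.SquareConnected P Q) :
    G'.IsStrongClique (μ '' P) := by
  rintro _ ⟨p, hp, rfl⟩ _ ⟨p', hp', rfl⟩ hne
  have hsp : ¬ ((μ p = a ∨ μ p = b) ∧ (μ p' = a ∨ μ p' = b)) := by
    rintro ⟨ha | hb, ha' | hb'⟩
    · exact hne (ha.trans ha'.symm)
    · exact hs.not_mem_both_fibres h hp hp' ha hb'
    · exact hs.not_mem_both_fibres h hp' hp ha' hb
    · exact hne (hb.trans hb'.symm)
  show G'.θ _ _ = 1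
  rw [← hs.θ_eq p p' hne hsp]
  exact h.1.isStrongClique_left hp hp' fun e => hne (e ▸ rfl)

lemma θ_eq_of_not_mem_image (hs : IsSplitting G' a b H μ) (h : H.SquareConnected P Q)
    {w p : W} (hw : μ w ∉ μ '' (P ∪ Q)) (hp : p ∈ P ∪ Q) : H.θ w p = G'.θ (μ w) (μ p) := by
  have hne : μ w ≠ μ p := fun e => hw ⟨p, hp, e.symm⟩
  refine hs.θ_eq w p hne ?_
  rintro ⟨ha | hb, ha' | hb'⟩
  · exact hne (ha.trans ha'.symm)
  · obtain ⟨x, hx, hxa⟩ := hs.mem_fibre_a_of_mem_fibre_b h hp hb'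
    exact hw ⟨x, hx, hxa.trans ha.symm⟩
  · obtain ⟨y, hy, hyb⟩ := hs.mem_fibre_b_of_mem_fibre_a h hp ha'
    exact hw ⟨y, hy, hyb.trans hb.symm⟩
  · exact hne (hb.trans hb'.symm)

lemma nontrivial_image (hs : IsSplitting G' a b H μ) (h : H.SquareConnected P Q) :
    (μ '' P).Nontrivial := by
  obtain ⟨v₁, v₂, v₃, v₄, hsq, hsub⟩ := h.hasSquareIn
  obtain ⟨p₁, p₂, q₁, q₂, hp₁, hp₂, -, -, hne, -, -, -, -, -, hS⟩ :=
    hsq.exists_of_subset_union h.1.isStrongClique_left h.1.isStrongClique_right hsub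
  exact ⟨μ p₁, ⟨p₁, hp₁, rfl⟩, μ p₂, ⟨p₂, hp₂, rfl⟩,
    hs.injOn_square hsq (by rw [hS]; simp) (by rw [hS]; simp) hne⟩

lemma pure_image (hs : IsSplitting G' a b H μ) (h : H.SquareConnected P Q) {w : W}
    (hw : μ w ∉ μ '' (P ∪ Q)) {R : Set W} (hR : R ⊆ P ∪ Q)
    (hpure : H.StronglyComplete {w} R ∨ H.StronglyAnticomplete {w} R) :
    G'.StronglyComplete {μ w} (μ '' R) ∨ G'.StronglyAnticomplete {μ w} (μ '' R) := by
  have hθ : ∀ p ∈ R, H.θ w p = G'.θ (μ w) (μ p) := fun p hp =>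
    hs.θ_eq_of_not_mem_image h hw (hR hp)
  rcases hpure with hc | hc
  · refine Or.inl ?_
    rintro _ rfl _ ⟨p, hp, rfl⟩
    show G'.θ _ _ = 1
    rw [← hθ p hp]; exact hc w rfl p hp
  · refine Or.inr ?_
    rintro _ rfl _ ⟨p, hp, rfl⟩
    show G'.θ _ _ = -1
    rw [← hθ p hp]; exact hc w rfl p hp

lemma hposc_image (hs : IsSplitting G' a b H μ) (h : H.SquareConnected P Q) :
    G'.HPOSC (μ '' P) (μ '' Q) := by
  refine ⟨h.1.1.image μ, h.1.2.1.image μ, ?_, hs.isStrongClique_image h,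
    hs.isStrongClique_image h.symm, fun ⟨c, _, hPc, _⟩ => (hs.nontrivial_image h).ne_singleton hPc,
    fun c hc => ?_⟩
  · rw [Set.disjoint_left]
    rintro _ ⟨p, hp, rfl⟩ ⟨q, hq, e⟩
    exact hs.not_fibre_meets_both h hp hq e.symm
  · obtain ⟨w, rfl⟩ := hs.surjective c
    rw [← Set.image_union] at hc
    have hw : w ∉ P ∪ Q := fun hw => hc ⟨w, hw, rfl⟩
    exact ⟨hs.pure_image h hc Set.subset_union_left (h.1.pure hw).1,
      hs.pure_image h hc Set.subset_union_right (h.1.pure hw).2⟩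

lemma squareConnected_image (hs : IsSplitting G' a b H μ) (h : H.SquareConnected P Q) :
    G'.SquareConnected (μ '' P) (μ '' Q) := by
  have hside : ∀ {R}, (∀ S T : Set W, S.Nonempty → T.Nonempty → S ∪ T = R → Disjoint S T →
      H.SquareMeets (P ∪ Q) S T) → ∀ X₁ X₂ : Set V', X₁.Nonempty → X₂.Nonempty →
      X₁ ∪ X₂ = μ '' R → Disjoint X₁ X₂ → G'.SquareMeets (μ '' P ∪ μ '' Q) X₁ X₂ := by
    intro R hR X₁ X₂ h₁ h₂ hu hd
    obtain ⟨hS, hT, hST, hd'⟩ := preimage_partition h₁ h₂ hu hd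
    rw [← Set.image_union]
    exact (hs.squareMeets_map (hR _ _ hS hT hST hd')).mono
      ((Set.image_mono Set.inter_subset_right).trans (Set.image_preimage_subset μ X₁))
      ((Set.image_mono Set.inter_subset_right).trans (Set.image_preimage_subset μ X₂))
  exact ⟨hs.hposc_image h, hside h.2.1, hside h.2.2⟩

theorem laminar (hs : IsSplitting G' a b H μ) (hG' : G'.Laminar) : H.Laminar :=
  fun ⟨_, _, h⟩ => hG' ⟨_, _, hs.squareConnected_image h⟩

end IsSplitting

section Blocks

variable {G : Trigraph V} {X Y : Set V}

open Classical in
/-- The adjacency that two disjoint strong cliques of `G` get as vertices of an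
antithickening. -/
noncomputable def blockθ (G : Trigraph V) (X Y : Set V) : ℤ :=
  if G.StronglyComplete X Y then 1 else if G.StronglyAnticomplete X Y then -1 else 0

lemma blockθ_eq_one_iff : G.blockθ X Y = 1 ↔ G.StronglyComplete X Y := by
  unfold blockθ; split_ifs <;> simp_all

lemma blockθ_eq_neg_one_iff :
    G.blockθ X Y = -1 ↔ ¬ G.StronglyComplete X Y ∧ G.StronglyAnticomplete X Y := by
  unfold blockθ; split_ifs <;> simp_all

lemma blockθ_eq_zero_iff :
    G.blockθ X Y = 0 ↔ ¬ G.StronglyComplete X Y ∧ ¬ G.StronglyAnticomplete X Y := by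
  unfold blockθ; split_ifs <;> simp_all

lemma blockθ_comm : G.blockθ X Y = G.blockθ Y X := by
  by_cases h₁ : G.StronglyComplete X Y
  · rw [blockθ_eq_one_iff.2 h₁, blockθ_eq_one_iff.2 h₁.symm]
  by_cases h₂ : G.StronglyAnticomplete X Y
  · rw [blockθ_eq_neg_one_iff.2 ⟨h₁, h₂⟩, blockθ_eq_neg_one_iff.2 ⟨fun h => h₁ h.symm, h₂.symm⟩]
  · rw [blockθ_eq_zero_iff.2 ⟨h₁, h₂⟩,
      blockθ_eq_zero_iff.2 ⟨fun h => h₁ h.symm, fun h => h₂ h.symm⟩]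

lemma blockθ_mem : G.blockθ X Y = 1 ∨ G.blockθ X Y = 0 ∨ G.blockθ X Y = -1 := by
  unfold blockθ; split_ifs <;> simp

open Classical in
noncomputable def ofBlocks (G : Trigraph V) (J : W → Set V)
    (hJ : ∀ u v w, u ≠ v → u ≠ w → v ≠ w → G.blockθ (J u) (J v) = 0 →
      G.blockθ (J u) (J w) ≠ 0) : Trigraph W where
  θ u v := if u = v then 0 else G.blockθ (J u) (J v)
  range_mem u v := by split_ifs <;> simp [blockθ_mem]
  symm u v := by
    by_cases h : u = v
    · simp [h]
    · simp [h, Ne.symm h, blockθ_comm]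
  refl_zero v := by simp
  semi_matching u v w huv huw hvw h := by
    simp only [huv, huw, if_false] at h ⊢
    exact hJ u v w huv huw hvw h

variable {J : W → Set V}
  {hJ : ∀ u v w, u ≠ v → u ≠ w → v ≠ w → G.blockθ (J u) (J v) = 0 → G.blockθ (J u) (J w) ≠ 0}

lemma ofBlocks_θ {u v : W} (huv : u ≠ v) : (G.ofBlocks J hJ).θ u v = G.blockθ (J u) (J v) :=
  by simp [ofBlocks, huv]

lemma isThickening_ofBlocks (hne : ∀ w, (J w).Nonempty) (hcl : ∀ w, G.IsStrongClique (J w))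
    (hdisj : ∀ u v, u ≠ v → Disjoint (J u) (J v)) (hcov : ⋃ w, J w = Set.univ) :
    G.IsThickening (G.ofBlocks J hJ) J := by
  refine ⟨fun w => ⟨hne w, hcl w⟩, hdisj, hcov,
    fun u v huv => ⟨fun h => ?_, fun h => ?_, fun h => ?_⟩⟩
  · exact blockθ_eq_one_iff.1 ((ofBlocks_θ huv).symm.trans h)
  · exact (blockθ_eq_neg_one_iff.1 ((ofBlocks_θ huv).symm.trans h)).2
  · exact blockθ_eq_zero_iff.1 ((ofBlocks_θ huv).symm.trans h.2)

end Blocks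

namespace IsThickening

variable {G : Trigraph V} {G' : Trigraph V'} {I : V' → Set V} {X Y : Set V} {a b c d : V'}

lemma nonempty (hI : G.IsThickening G' I) (c : V') : (I c).Nonempty := (hI.1 c).1

lemma isStrongClique (hI : G.IsThickening G' I) (c : V') : G.IsStrongClique (I c) := (hI.1 c).2

lemma disjoint (hI : G.IsThickening G' I) (hcd : c ≠ d) : Disjoint (I c) (I d) := hI.2.1 c d hcd

lemma exists_mem (hI : G.IsThickening G' I) (x : V) : ∃ c, x ∈ I c :=
  Set.mem_iUnion.1 (hI.2.2.1 ▸ Set.mem_univ x)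

lemma stronglyComplete (hI : G.IsThickening G' I) (hcd : c ≠ d) (h : G'.StrongAdj c d) :
    G.StronglyComplete (I c) (I d) :=
  (hI.2.2.2 c d hcd).1 h

lemma stronglyAnticomplete (hI : G.IsThickening G' I) (hcd : c ≠ d)
    (h : G'.StrongAntiAdj c d) : G.StronglyAnticomplete (I c) (I d) :=
  (hI.2.2.2 c d hcd).2.1 h

lemma mixed (hI : G.IsThickening G' I) (h : G'.SemiAdj c d) :
    ¬ G.StronglyComplete (I c) (I d) ∧ ¬ G.StronglyAnticomplete (I c) (I d) :=
  (hI.2.2.2 c d h.1).2.2 h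

lemma eq_of_mem (hI : G.IsThickening G' I) {x : V} (hc : x ∈ I c)
    (hd : x ∈ I d) : c = d := by
  by_contra hcd
  exact (hI.disjoint hcd).ne_of_mem hc hd rfl

lemma blockθ_eq (hI : G.IsThickening G' I) (hcd : c ≠ d) (hX : X ⊆ I c)
    (hY : Y ⊆ I d) (hXne : X.Nonempty) (hYne : Y.Nonempty) (h0 : G'.θ c d ≠ 0) :
    G.blockθ X Y = G'.θ c d := by
  rcases G'.range_mem c d with h | h | h
  · rw [h, blockθ_eq_one_iff]
    exact (hI.stronglyComplete hcd h).mono hX hY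
  · exact absurd h h0
  · have hSA := (hI.stronglyAnticomplete hcd h).mono hX hY
    rw [h, blockθ_eq_neg_one_iff]
    exact ⟨fun hSC => hSC.not_stronglyAnticomplete hXne hYne hSA, hSA⟩

lemma blockθ_eq_self (hI : G.IsThickening G' I) (hcd : c ≠ d) :
    G.blockθ (I c) (I d) = G'.θ c d := by
  by_cases h0 : G'.θ c d = 0
  · rw [h0, blockθ_eq_zero_iff]
    exact hI.mixed ⟨hcd, h0⟩
  · exact hI.blockθ_eq hcd subset_rfl subset_rfl (hI.nonempty c)
      (hI.nonempty d) h0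

lemma blockθ_eq_one (hI : G.IsThickening G' I) (hX : X ⊆ I c) (hY : Y ⊆ I c)
    (hXY : Disjoint X Y) : G.blockθ X Y = 1 :=
  blockθ_eq_one_iff.2 fun _ hx _ hy => hI.isStrongClique c (hX hx) (hY hy) (hXY.ne_of_mem hx hy)

lemma semiAdj_of_eq_singleton (hI : G.IsThickening G' I) (hab : G'.SemiAdj a b) {x y : V}
    (hx : I a = {x}) (hy : I b = {y}) : G.SemiAdj x y := by
  obtain ⟨hSC, hSA⟩ := hI.mixed hab
  have hdisj := hI.disjoint hab.1
  rw [hx, hy] at hSC hSA hdisj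
  simp only [stronglyComplete_singleton_left, stronglyAnticomplete_singleton_left,
    Set.mem_singleton_iff, forall_eq, StrongAdj, StrongAntiAdj] at hSC hSA
  refine ⟨Set.disjoint_singleton.1 hdisj, ?_⟩
  rcases G.range_mem x y with h | h | h <;> simp_all

lemma hposc_of_semiAdj (hI : G.IsThickening G' I) (hab : G'.SemiAdj a b)
    (hns : ¬ ∃ x y, I a = {x} ∧ I b = {y}) : G.HPOSC (I a) (I b) := by
  refine ⟨hI.nonempty a, hI.nonempty b, hI.disjoint hab.1, hI.isStrongClique a,
    hI.isStrongClique b, hns, fun v hv => ?_⟩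
  obtain ⟨c, hc⟩ := hI.exists_mem v
  have hca : c ≠ a := fun e => hv (Or.inl (e ▸ hc))
  have hcb : c ≠ b := fun e => hv (Or.inr (e ▸ hc))
  have hpure : ∀ d, d = a ∨ d = b →
      G.StronglyComplete {v} (I d) ∨ G.StronglyAnticomplete {v} (I d) := fun d hd => by
    have hcd : c ≠ d := fun e => hd.elim (hca <| e.trans ·) (hcb <| e.trans ·)
    have hsub : {v} ⊆ I c := Set.singleton_subset_iff.2 hc
    rcases G'.range_mem c d with h | h | h
    · exact Or.inl ((hI.stronglyComplete hcd h).mono hsub subset_rfl)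
    · exact absurd h (hab.θ_ne_zero_of_mem hca hcb hd)
    · exact Or.inr ((hI.stronglyAnticomplete hcd h).mono hsub subset_rfl)
  exact ⟨hpure a (Or.inl rfl), hpure b (Or.inr rfl)⟩

end IsThickening

section LocalSplit

variable {K : Type}

/-- Blocks `L k ⊆ I (ℓ k)` that may replace `I a` and `I b` in the antithickening given by `I`;
the last three fields become those of `IsSplitting`. -/
structure IsLocalSplit (G : Trigraph V) (I : V' → Set V) (a b : V') (L : K → Set V)
    (ℓ : K → V') : Prop where
  label : ∀ k, ℓ k = a ∨ ℓ k = b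
  nonempty : ∀ k, (L k).Nonempty
  subset : ∀ k, L k ⊆ I (ℓ k)
  disjoint : ∀ k k', k ≠ k' → Disjoint (L k) (L k')
  cover : ∀ x ∈ I a ∪ I b, ∃ k, x ∈ L k
  matching : ∃ partner : K → K, ∀ k k', k ≠ k' → k' ≠ partner k →
    G.StronglyComplete (L k) (L k') ∨ G.StronglyAnticomplete (L k) (L k')
  mixed : ∀ k, ℓ k = b →
    ¬ G.StronglyComplete (I a) (L k) ∧ ¬ G.StronglyAnticomplete (I a) (L k)
  not_complete_complete : ∀ k₁ k₂ k₃ k₄, ℓ k₁ = a → ℓ k₂ = a → ℓ k₃ = b → ℓ k₄ = b →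
    k₁ ≠ k₂ → k₃ ≠ k₄ → ¬ (G.StronglyComplete (L k₁) (L k₃) ∧ G.StronglyComplete (L k₂) (L k₄))
  not_anticomplete_anticomplete : ∀ k₁ k₂ k₃ k₄, ℓ k₁ = a → ℓ k₂ = a → ℓ k₃ = b →
    ℓ k₄ = b → k₁ ≠ k₂ → k₃ ≠ k₄ →
    ¬ (G.StronglyAnticomplete (L k₁) (L k₃) ∧ G.StronglyAnticomplete (L k₂) (L k₄))

def splitBlocks (I : V' → Set V) (a b : V') (L : K → Set V) :
    {c // c ≠ a ∧ c ≠ b} ⊕ K → Set V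
  | .inl c => I c
  | .inr k => L k

def splitMap (a b : V') (ℓ : K → V') : {c // c ≠ a ∧ c ≠ b} ⊕ K → V'
  | .inl c => c
  | .inr k => ℓ k

namespace IsLocalSplit

variable {G : Trigraph V} {G' : Trigraph V'} {I : V' → Set V} {a b : V'} {L : K → Set V}
  {ℓ : K → V'}

lemma splitBlocks_subset (hL : IsLocalSplit G I a b L ℓ) (w : {c // c ≠ a ∧ c ≠ b} ⊕ K) :
    splitBlocks I a b L w ⊆ I (splitMap a b ℓ w) := by
  cases w with
  | inl c => exact subset_rfl
  | inr k => exact hL.subset k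

lemma splitBlocks_nonempty (hI : G.IsThickening G' I) (hL : IsLocalSplit G I a b L ℓ)
    (w : {c // c ≠ a ∧ c ≠ b} ⊕ K) : (splitBlocks I a b L w).Nonempty := by
  cases w with
  | inl c => exact hI.nonempty c
  | inr k => exact hL.nonempty k

lemma splitMap_ne (hL : IsLocalSplit G I a b L ℓ) (c : {c // c ≠ a ∧ c ≠ b})
    (w : {c // c ≠ a ∧ c ≠ b} ⊕ K) (hw : w ≠ .inl c) : c.1 ≠ splitMap a b ℓ w := by
  cases w with
  | inl d => exact fun e => hw (congrArg Sum.inl (Subtype.ext e.symm))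
  | inr k => rcases hL.label k with h | h <;> simp only [splitMap, h] <;> [exact c.2.1; exact c.2.2]

lemma exists_eq_inr {w : {c // c ≠ a ∧ c ≠ b} ⊕ K}
    (hw : splitMap a b ℓ w = a ∨ splitMap a b ℓ w = b) :
    ∃ k, w = .inr k := by
  cases w with
  | inl c => exact (hw.elim c.2.1 c.2.2).elim
  | inr k => exact ⟨k, rfl⟩

lemma exists_label_eq (hI : G.IsThickening G' I) (hL : IsLocalSplit G I a b L ℓ) {c : V'}
    {x : V} (hx : x ∈ I c) (hc : c = a ∨ c = b) : ∃ k, ℓ k = c ∧ x ∈ L k := by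
  obtain ⟨k, hk⟩ := hL.cover x (hc.elim (fun h => Or.inl (h ▸ hx)) fun h => Or.inr (h ▸ hx))
  exact ⟨k, hI.eq_of_mem (hL.subset k hk) hx, hk⟩

lemma splitBlocks_disjoint (hI : G.IsThickening G' I) (hL : IsLocalSplit G I a b L ℓ)
    (u v : {c // c ≠ a ∧ c ≠ b} ⊕ K) (huv : u ≠ v) :
    Disjoint (splitBlocks I a b L u) (splitBlocks I a b L v) := by
  cases u with
  | inl c =>
    exact (hI.disjoint (hL.splitMap_ne c v huv.symm)).mono_right (hL.splitBlocks_subset v)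
  | inr k =>
    cases v with
    | inl d => exact ((hI.disjoint (hL.splitMap_ne d _ huv)).mono_right (hL.subset k)).symm
    | inr k' => exact hL.disjoint k k' fun e => huv (e ▸ rfl)

lemma blockθ_inl (hI : G.IsThickening G' I) (hab : G'.SemiAdj a b)
    (hL : IsLocalSplit G I a b L ℓ) (c : {c // c ≠ a ∧ c ≠ b})
    (w : {c // c ≠ a ∧ c ≠ b} ⊕ K) (hw : w ≠ .inl c) :
    G.blockθ (splitBlocks I a b L (.inl c)) (splitBlocks I a b L w) =
      G'.θ c (splitMap a b ℓ w) := by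
  have hne := hL.splitMap_ne c w hw
  cases w with
  | inl d => exact hI.blockθ_eq_self hne
  | inr k =>
    exact hI.blockθ_eq hne subset_rfl (hL.subset k) (hI.nonempty c) (hL.nonempty k)
      (hab.θ_ne_zero_of_mem c.2.1 c.2.2 (hL.label k))

lemma blockθ_inl_inr_ne_zero (hI : G.IsThickening G' I) (hab : G'.SemiAdj a b)
    (hL : IsLocalSplit G I a b L ℓ) (c : {c // c ≠ a ∧ c ≠ b}) (k : K) :
    G.blockθ (splitBlocks I a b L (.inl c)) (splitBlocks I a b L (.inr k)) ≠ 0 := by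
  rw [hL.blockθ_inl hI hab c (.inr k) Sum.inr_ne_inl]
  exact hab.θ_ne_zero_of_mem c.2.1 c.2.2 (hL.label k)

lemma blockθ_matching (hI : G.IsThickening G' I) (hab : G'.SemiAdj a b)
    (hL : IsLocalSplit G I a b L ℓ) (u v w : {c // c ≠ a ∧ c ≠ b} ⊕ K) (huv : u ≠ v)
    (huw : u ≠ w) (hvw : v ≠ w)
    (h : G.blockθ (splitBlocks I a b L u) (splitBlocks I a b L v) = 0) :
    G.blockθ (splitBlocks I a b L u) (splitBlocks I a b L w) ≠ 0 := by
  have hinr := hL.blockθ_inl_inr_ne_zero hI hab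
  cases u with
  | inl c =>
    rw [hL.blockθ_inl hI hab c v huv.symm] at h
    rw [hL.blockθ_inl hI hab c w huw.symm]
    cases v with
    | inr k => exact absurd h (hab.θ_ne_zero_of_mem c.2.1 c.2.2 (hL.label k))
    | inl d =>
      have hcd := hL.splitMap_ne c (.inl d) huv.symm
      have hcw := hL.splitMap_ne c w huw.symm
      have hdw := hL.splitMap_ne d w hvw.symm
      exact G'.semi_matching c d _ hcd hcw hdw h
  | inr k =>
    cases v with
    | inl d => exact absurd (blockθ_comm.trans h) (hinr d k)
    | inr k' =>
      cases w with
      | inl e => rw [blockθ_comm]; exact hinr e k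
      | inr k'' =>
        intro h'
        obtain ⟨partner, hpure⟩ := hL.matching
        have hmix : ∀ {j}, k ≠ j → G.blockθ (L k) (L j) = 0 → j = partner k := fun hkj hj => by
          by_contra hj'
          rcases hpure k _ hkj hj' with hc | hc
          · exact absurd (blockθ_eq_zero_iff.1 hj).1 (not_not.2 hc)
          · exact absurd (blockθ_eq_zero_iff.1 hj).2 (not_not.2 hc)
        have e₁ := hmix (fun e => huv (e ▸ rfl)) h
        have e₂ := hmix (fun e => huw (e ▸ rfl)) h'
        exact hvw (congrArg Sum.inr (e₁.trans e₂.symm))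

noncomputable def trigraph (hI : G.IsThickening G' I) (hab : G'.SemiAdj a b)
    (hL : IsLocalSplit G I a b L ℓ) : Trigraph ({c // c ≠ a ∧ c ≠ b} ⊕ K) :=
  G.ofBlocks (splitBlocks I a b L) (hL.blockθ_matching hI hab)

lemma isThickening_trigraph (hI : G.IsThickening G' I) (hab : G'.SemiAdj a b)
    (hL : IsLocalSplit G I a b L ℓ) :
    G.IsThickening (hL.trigraph hI hab) (splitBlocks I a b L) := by
  refine isThickening_ofBlocks (hL.splitBlocks_nonempty hI)
    (fun w => (hI.isStrongClique _).mono (hL.splitBlocks_subset w)) (hL.splitBlocks_disjoint hI) ?_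
  refine Set.eq_univ_of_forall fun x => ?_
  obtain ⟨c, hx⟩ := hI.exists_mem x
  by_cases hc : c = a ∨ c = b
  · obtain ⟨k, -, hk⟩ := hL.exists_label_eq hI hx hc
    exact Set.mem_iUnion.2 ⟨.inr k, hk⟩
  · push Not at hc
    exact Set.mem_iUnion.2 ⟨.inl ⟨c, hc⟩, hx⟩

lemma stronglyComplete_of_strongAdj (hI : G.IsThickening G' I) (hab : G'.SemiAdj a b)
    (hL : IsLocalSplit G I a b L ℓ) {k k' : K}
    (h : (hL.trigraph hI hab).StrongAdj (.inr k) (.inr k')) :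
    G.StronglyComplete (L k) (L k') :=
  blockθ_eq_one_iff.1 ((ofBlocks_θ h.ne).symm.trans h)

lemma stronglyAnticomplete_of_strongAntiAdj (hI : G.IsThickening G' I)
    (hab : G'.SemiAdj a b) (hL : IsLocalSplit G I a b L ℓ) {k k' : K}
    (h : (hL.trigraph hI hab).StrongAntiAdj (.inr k) (.inr k')) :
    G.StronglyAnticomplete (L k) (L k') :=
  (blockθ_eq_neg_one_iff.1 ((ofBlocks_θ h.ne).symm.trans h)).2

lemma mixed_trigraph (hI : G.IsThickening G' I) (hab : G'.SemiAdj a b)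
    (hL : IsLocalSplit G I a b L ℓ) (y : {c // c ≠ a ∧ c ≠ b} ⊕ K) (hy : splitMap a b ℓ y = b) :
    (∃ x, splitMap a b ℓ x = a ∧ ¬ (hL.trigraph hI hab).StrongAdj x y) ∧
      ∃ x, splitMap a b ℓ x = a ∧ ¬ (hL.trigraph hI hab).StrongAntiAdj x y := by
  obtain ⟨k, rfl⟩ := exists_eq_inr (Or.inr hy)
  obtain ⟨hSC, hSA⟩ := hL.mixed k hy
  simp only [StronglyComplete, StronglyAnticomplete, not_forall] at hSC hSA
  obtain ⟨x₁, hx₁, y₁, hy₁, hne₁⟩ := hSC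
  obtain ⟨x₂, hx₂, y₂, hy₂, hne₂⟩ := hSA
  obtain ⟨k₁, hk₁, hx₁k⟩ := hL.exists_label_eq hI hx₁ (Or.inl rfl)
  obtain ⟨k₂, hk₂, hx₂k⟩ := hL.exists_label_eq hI hx₂ (Or.inl rfl)
  exact ⟨⟨.inr k₁, hk₁, fun h => hne₁ (hL.stronglyComplete_of_strongAdj hI hab h x₁ hx₁k y₁ hy₁)⟩,
    .inr k₂, hk₂,
    fun h => hne₂ (hL.stronglyAnticomplete_of_strongAntiAdj hI hab h x₂ hx₂k y₂ hy₂)⟩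

lemma isSplitting (hI : G.IsThickening G' I) (hab : G'.SemiAdj a b)
    (hL : IsLocalSplit G I a b L ℓ) :
    IsSplitting G' a b (hL.trigraph hI hab) (splitMap a b ℓ) where
  semiAdj := hab
  surjective c := by
    by_cases hc : c = a ∨ c = b
    · obtain ⟨x, hx⟩ := hI.nonempty c
      obtain ⟨k, hk, -⟩ := hL.exists_label_eq hI hx hc
      exact ⟨.inr k, hk⟩
    · push Not at hc
      exact ⟨.inl ⟨c, hc⟩, rfl⟩
  eq_of_outer u v huv hua hub := by
    cases u with
    | inr k => exact (hL.label k |>.elim hua hub).elim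
    | inl c =>
      cases v with
      | inr k =>
        exact ((hL.label k).elim (fun h => hua (huv.trans h)) fun h => hub (huv.trans h)).elim
      | inl d => exact congrArg Sum.inl (Subtype.ext huv)
  θ_eq u v huv hsp := by
    have hne : u ≠ v := fun e => huv (e ▸ rfl)
    rw [trigraph, ofBlocks_θ hne]
    by_cases hu : ∃ c, u = .inl c
    · obtain ⟨c, rfl⟩ := hu
      exact hL.blockθ_inl hI hab c v hne.symm
    · obtain ⟨k, rfl⟩ : ∃ k, u = .inr k := by cases u <;> simp_all
      obtain ⟨c, rfl⟩ : ∃ c, v = .inl c := by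
        cases v with
        | inl c => exact ⟨c, rfl⟩
        | inr k' => exact (hsp ⟨hL.label k, hL.label k'⟩).elim
      rw [blockθ_comm, hL.blockθ_inl hI hab c _ hne, G'.symm]
      rfl
  strongAdj_of_eq u v huv he := by
    show (hL.trigraph hI hab).θ u v = 1
    rw [trigraph, ofBlocks_θ huv]
    exact hI.blockθ_eq_one (hL.splitBlocks_subset u) (he ▸ hL.splitBlocks_subset v)
      (hL.splitBlocks_disjoint hI u v huv)
  mixed := hL.mixed_trigraph hI hab
  not_strongAdj_strongAdj x x' y y' hx hx' hy hy' hxx' hyy' h := by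
    obtain ⟨k₁, rfl⟩ := exists_eq_inr (Or.inl hx)
    obtain ⟨k₂, rfl⟩ := exists_eq_inr (Or.inl hx')
    obtain ⟨k₃, rfl⟩ := exists_eq_inr (Or.inr hy)
    obtain ⟨k₄, rfl⟩ := exists_eq_inr (Or.inr hy')
    exact hL.not_complete_complete k₁ k₂ k₃ k₄ hx hx' hy hy' (fun e => hxx' (e ▸ rfl))
      (fun e => hyy' (e ▸ rfl)) ⟨hL.stronglyComplete_of_strongAdj hI hab h.1,
        hL.stronglyComplete_of_strongAdj hI hab h.2⟩
  not_strongAntiAdj_strongAntiAdj x x' y y' hx hx' hy hy' hxx' hyy' h := by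
    obtain ⟨k₁, rfl⟩ := exists_eq_inr (Or.inl hx)
    obtain ⟨k₂, rfl⟩ := exists_eq_inr (Or.inl hx')
    obtain ⟨k₃, rfl⟩ := exists_eq_inr (Or.inr hy)
    obtain ⟨k₄, rfl⟩ := exists_eq_inr (Or.inr hy')
    exact hL.not_anticomplete_anticomplete k₁ k₂ k₃ k₄ hx hx' hy hy' (fun e => hxx' (e ▸ rfl))
      (fun e => hyy' (e ▸ rfl)) ⟨hL.stronglyAnticomplete_of_strongAntiAdj hI hab h.1,
        hL.stronglyAnticomplete_of_strongAntiAdj hI hab h.2⟩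

end IsLocalSplit

lemma card_lt_card_sum [Finite V'] [Finite K] (a b : V') (hK : 3 ≤ Nat.card K) :
    Nat.card V' < Nat.card ({c // c ≠ a ∧ c ≠ b} ⊕ K) := by
  have h₁ := Set.ncard_add_ncard_compl ({a, b} : Set V')
  have h₂ : ({a, b} : Set V').ncard ≤ 2 :=
    (Set.ncard_insert_le a {b}).trans (by rw [Set.ncard_singleton])
  have h₃ : Nat.card {c // c ≠ a ∧ c ≠ b} = ({a, b} : Set V')ᶜ.ncard := by
    rw [← Nat.card_coe_set_eq]
    exact Nat.card_congr (Equiv.subtypeEquivRight fun c => by simp)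
  rw [Nat.card_sum, h₃]
  omega

lemma OptimalAntithickening.not_isLocalSplit [Finite V'] [Finite K] {G : Trigraph V}
    {G' : Trigraph V'} {I : V' → Set V} {a b : V'} {L : K → Set V} {ℓ : K → V'}
    (hopt : G.OptimalAntithickening G' I) (hab : G'.SemiAdj a b)
    (hL : IsLocalSplit G I a b L ℓ) (hK : 3 ≤ Nat.card K) : False := by
  have := hopt.2.2 _ _ _ (hL.isThickening_trigraph hopt.1 hab)
    ((hL.isSplitting hopt.1 hab).laminar hopt.2.1)
  exact (card_lt_card_sum a b hK).not_ge this

end LocalSplit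

structure IsDoubleSplit (G : Trigraph V) (A B A₁ A₂ B₁ B₂ : Set V) : Prop where
  nonempty_A₁ : A₁.Nonempty
  nonempty_A₂ : A₂.Nonempty
  nonempty_B₁ : B₁.Nonempty
  nonempty_B₂ : B₂.Nonempty
  union_A : A₁ ∪ A₂ = A
  disjoint_A : Disjoint A₁ A₂
  union_B : B₁ ∪ B₂ = B
  disjoint_B : Disjoint B₁ B₂
  anticomplete : G.StronglyAnticomplete A₁ B₂
  complete : G.StronglyComplete A₂ B₁
  mixed₁ : ¬ G.StronglyComplete A₁ B₁ ∧ ¬ G.StronglyAnticomplete A₁ B₁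
  mixed₂ : ¬ G.StronglyComplete A₂ B₂ ∧ ¬ G.StronglyAnticomplete A₂ B₂

section DoubleSplit

variable {G : Trigraph V} {A B A₁ A₂ : Set V}

/-- Otherwise `x₁ x₂ y' y` is a square for suitable `y, y' ∈ B`. -/
lemma nested_of_not_squareMeets (hA : G.IsStrongClique A) (hB : G.IsStrongClique B)
    (hAB : Disjoint A B) (hA₁ : A₁ ⊆ A) (hA₂ : A₂ ⊆ A) (hd : Disjoint A₁ A₂)
    (hno : ¬ G.SquareMeets (A ∪ B) A₁ A₂) {x₁ x₂ : V} (hx₁ : x₁ ∈ A₁) (hx₂ : x₂ ∈ A₂) :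
    (∀ y ∈ B, G.Adj x₁ y → G.StrongAdj x₂ y) ∨ ∀ y ∈ B, G.Adj x₂ y → G.StrongAdj x₁ y := by
  by_contra! h
  obtain ⟨⟨y, hy, hy₁, hy₂⟩, ⟨y', hy', hy'₂, hy'₁⟩⟩ := h
  have hne : ∀ {x z}, x ∈ A → z ∈ B → x ≠ z := fun hx hz => hAB.ne_of_mem hx hz
  have hx₁₂ : x₁ ≠ x₂ := hd.ne_of_mem hx₁ hx₂
  have hyy' : y ≠ y' := by
    rintro rfl
    have h₁ : G.θ x₁ y = 0 := hy₁.2.resolve_left hy'₁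
    have h₂ : G.θ x₂ y = 0 := hy'₂.2.resolve_left hy₂
    exact G.semi_matching y x₁ x₂ (hne (hA₁ hx₁) hy).symm (hne (hA₂ hx₂) hy).symm hx₁₂
      (by rw [G.symm]; exact h₁) (by rw [G.symm]; exact h₂)
  refine hno ⟨x₁, x₂, y', y, ⟨antiAdj_of_not_strongAdj (hne (hA₁ hx₁) hy') hy'₁,
    antiAdj_of_not_strongAdj (hne (hA₂ hx₂) hy) hy₂, (hA (hA₁ hx₁) (hA₂ hx₂) hx₁₂).adj, hy'₂,
    (hB hy' hy hyy'.symm).adj, hy₁.symm⟩, ?_, ⟨x₁, by simp, hx₁⟩, ⟨x₂, by simp, hx₂⟩⟩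
  intro z hz
  simp only [Set.mem_insert_iff, Set.mem_singleton_iff] at hz
  rcases hz with rfl | rfl | rfl | rfl
  exacts [Or.inl (hA₁ hx₁), Or.inl (hA₂ hx₂), Or.inr hy', Or.inr hy]

lemma strongAdj_of_nested
    (hnest : ∀ x₁ ∈ A₁, ∀ x₂ ∈ A₂,
      (∀ y ∈ B, G.Adj x₁ y → G.StrongAdj x₂ y) ∨ ∀ y ∈ B, G.Adj x₂ y → G.StrongAdj x₁ y)
    {t y y' x₁ : V} (ht : t ∈ A₂) (hy' : y' ∈ B) (hy'A₁ : ∀ x ∈ A₁, ¬ G.Adj x y')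
    (hty' : G.Adj t y') (hy : y ∈ B) (hx₁ : x₁ ∈ A₁) (hx₁y : G.Adj x₁ y) : G.StrongAdj t y :=
  (hnest x₁ hx₁ t ht).elim (fun h => h y hy hx₁y)
    fun h => (hy'A₁ x₁ hx₁ (h y' hy' hty').adj).elim

lemma exists_adj_of_not_stronglyAnticomplete (hAB : Disjoint A B) {y : V} (hy : y ∈ B)
    (h : ¬ G.StronglyAnticomplete A {y}) : ∃ x ∈ A, G.Adj x y := by
  by_contra! h'
  refine h fun x hx z hz => ?_
  rw [Set.mem_singleton_iff] at hz
  subst hz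
  by_contra hxy
  exact h' x hx (adj_of_not_strongAntiAdj (hAB.ne_of_mem hx hy) hxy)

lemma exists_isDoubleSplit_of_anticomplete (hAB : Disjoint A B) (hA : A₁ ∪ A₂ = A)
    (hd : Disjoint A₁ A₂) (hA₁ : A₁.Nonempty)
    (hrow : ∀ x ∈ A, ¬ G.StronglyComplete {x} B ∧ ¬ G.StronglyAnticomplete {x} B)
    (hcol : ∀ y ∈ B, ¬ G.StronglyComplete A {y} ∧ ¬ G.StronglyAnticomplete A {y})
    (hnest : ∀ x₁ ∈ A₁, ∀ x₂ ∈ A₂,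
      (∀ y ∈ B, G.Adj x₁ y → G.StrongAdj x₂ y) ∨ ∀ y ∈ B, G.Adj x₂ y → G.StrongAdj x₁ y)
    {y₀ : V} (hy₀ : y₀ ∈ B) (hy₀A₁ : G.StronglyAnticomplete A₁ {y₀}) :
    ∃ A₁' A₂' B₁' B₂', G.IsDoubleSplit A B A₁' A₂' B₁' B₂' := by
  set U := {y ∈ B | ∃ x ∈ A₁, G.Adj x y}
  set T := {t ∈ A₂ | ∃ y ∈ B \ U, G.Adj t y}
  have hTA : T ⊆ A := fun t ht => hA ▸ Or.inr ht.1
  have hTU : G.StronglyComplete T U := fun t ⟨ht, y', ⟨hy', hy'U⟩, hty'⟩ y ⟨hy, x₁, hx₁, hx₁y⟩ =>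
    strongAdj_of_nested hnest ht hy' (fun x hx hxy' => hy'U ⟨hy', x, hx, hxy'⟩) hty' hy hx₁ hx₁y
  have hAT : G.StronglyAnticomplete (A \ T) (B \ U) := by
    rintro x ⟨hx, hxT⟩ y ⟨hy, hyU⟩
    by_contra hxy
    have hadj := adj_of_not_strongAntiAdj (hAB.ne_of_mem hx hy) hxy
    rw [← hA] at hx
    rcases hx with hx | hx
    exacts [hyU ⟨hy, x, hx, hadj⟩, hxT ⟨hx, y, ⟨hy, hyU⟩, hadj⟩]
  have hy₀U : y₀ ∉ U := fun ⟨_, x, hx, hxy⟩ => hxy.not_strongAntiAdj (hy₀A₁ x hx y₀ rfl)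
  have hA₁T : A₁ ⊆ A \ T := fun x hx => ⟨hA ▸ Or.inl hx, fun hxT => hd.ne_of_mem hx hxT.1 rfl⟩
  obtain ⟨x₁, hx₁⟩ := hA₁
  obtain ⟨y₁, hy₁, hy₁x₁⟩ := exists_adj_of_not_stronglyAnticomplete hAB.symm (hA ▸ Or.inl hx₁)
    fun h => (hrow x₁ (hA ▸ Or.inl hx₁)).2 h.symm
  have hx₁y₁ := hy₁x₁.symm
  obtain ⟨t, ht, hty₀⟩ := exists_adj_of_not_stronglyAnticomplete hAB hy₀ (hcol y₀ hy₀).2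
  have htT : t ∈ T := by
    rw [← hA] at ht
    refine ⟨ht.resolve_left fun ht => hty₀.not_strongAntiAdj (hy₀A₁ t ht y₀ rfl), y₀, ⟨hy₀, hy₀U⟩,
      hty₀⟩
  refine ⟨A \ T, T, U, B \ U, ⟨⟨x₁, hA₁T hx₁⟩, ⟨t, htT⟩, ⟨y₁, hy₁, x₁, hx₁, hx₁y₁⟩,
    ⟨y₀, hy₀, hy₀U⟩, Set.sdiff_union_of_subset hTA, Set.disjoint_sdiff_left,
    Set.union_sdiff_cancel fun _ hy => hy.1, Set.disjoint_sdiff_right, hAT, hTU, ⟨?_, ?_⟩,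
    ⟨?_, ?_⟩⟩⟩
  · refine fun h => (hcol y₁ hy₁).1 fun x hx _ hy => hy ▸ ?_
    by_cases hxT : x ∈ T
    exacts [hTU x hxT y₁ ⟨hy₁, x₁, hx₁, hx₁y₁⟩, h x ⟨hx, hxT⟩ y₁ ⟨hy₁, x₁, hx₁, hx₁y₁⟩]
  · exact fun h => hx₁y₁.not_strongAntiAdj (h x₁ (hA₁T hx₁) y₁ ⟨hy₁, x₁, hx₁, hx₁y₁⟩)
  · refine fun h => (hrow t (hTA htT)).1 fun _ hx y hy => hx ▸ ?_
    by_cases hyU : y ∈ U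
    exacts [hTU t htT y hyU, h t htT y ⟨hy, hyU⟩]
  · obtain ⟨y, hy, hty⟩ := htT.2
    exact fun h => hty.not_strongAntiAdj (h t htT y hy)

lemma exists_anticomplete_of_nested [Finite V] (hAB : Disjoint A B) (hA : A₁ ∪ A₂ = A)
    (hA₂ : A₂.Nonempty)
    (hrow : ∀ x ∈ A, ¬ G.StronglyComplete {x} B ∧ ¬ G.StronglyAnticomplete {x} B)
    (hnest : ∀ x₁ ∈ A₁, ∀ x₂ ∈ A₂,
      (∀ y ∈ B, G.Adj x₁ y → G.StrongAdj x₂ y) ∨ ∀ y ∈ B, G.Adj x₂ y → G.StrongAdj x₁ y) :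
    ∃ y₀ ∈ B, G.StronglyAnticomplete A₁ {y₀} ∨ G.StronglyAnticomplete A₂ {y₀} := by
  by_contra! h
  have hAB₁ : Disjoint A₁ B := hAB.mono_left (hA ▸ Set.subset_union_left)
  have hAB₂ : Disjoint A₂ B := hAB.mono_left (hA ▸ Set.subset_union_right)
  have hnsc : ∀ x ∈ A, ∃ y ∈ B, ¬ G.StrongAdj x y := fun x hx => by
    by_contra! h'
    exact (hrow x hx).1 fun _ hx' y hy => hx' ▸ h' y hy
  -- choose `x₂ ∈ A₂` with the most strong neighbours in `B`; nestedness yields one with more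
  obtain ⟨x₂, hx₂, hmax⟩ := Set.Finite.exists_maximalFor
    (fun x => {y ∈ B | G.StrongAdj x y}.ncard) A₂ (Set.toFinite _) hA₂
  obtain ⟨y, hy, hx₂y⟩ := hnsc x₂ (hA ▸ Or.inr hx₂)
  obtain ⟨x₁, hx₁, hx₁y⟩ := exists_adj_of_not_stronglyAnticomplete hAB₁ hy (h y hy).1
  have h₂₁ : ∀ z ∈ B, G.Adj x₂ z → G.StrongAdj x₁ z :=
    (hnest x₁ hx₁ x₂ hx₂).resolve_left fun h' => hx₂y (h' y hy hx₁y)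
  obtain ⟨y', hy', hx₁y'⟩ := hnsc x₁ (hA ▸ Or.inl hx₁)
  obtain ⟨x₂', hx₂', hx₂'y'⟩ := exists_adj_of_not_stronglyAnticomplete hAB₂ hy' (h y' hy').2
  have h₁₂ : ∀ z ∈ B, G.Adj x₁ z → G.StrongAdj x₂' z :=
    (hnest x₁ hx₁ x₂' hx₂').resolve_right fun h' => hx₁y' (h' y' hy' hx₂'y')
  have hsub : {z ∈ B | G.StrongAdj x₂ z} ⊆ {z ∈ B | G.StrongAdj x₂' z} :=
    fun z ⟨hz, hx₂z⟩ => ⟨hz, h₁₂ z hz (h₂₁ z hz hx₂z.adj).adj⟩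
  have heq := Set.eq_of_subset_of_ncard_le hsub (hmax hx₂' (Set.ncard_le_ncard hsub))
    (Set.toFinite _)
  have hy₂ : y ∈ {z ∈ B | G.StrongAdj x₂ z} := heq ▸ ⟨hy, h₁₂ y hy hx₁y⟩
  exact hx₂y hy₂.2

lemma exists_isDoubleSplit [Finite V] (hAB : Disjoint A B) (hA : A₁ ∪ A₂ = A)
    (hd : Disjoint A₁ A₂) (hA₁ : A₁.Nonempty) (hA₂ : A₂.Nonempty)
    (hrow : ∀ x ∈ A, ¬ G.StronglyComplete {x} B ∧ ¬ G.StronglyAnticomplete {x} B)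
    (hcol : ∀ y ∈ B, ¬ G.StronglyComplete A {y} ∧ ¬ G.StronglyAnticomplete A {y})
    (hnest : ∀ x₁ ∈ A₁, ∀ x₂ ∈ A₂,
      (∀ y ∈ B, G.Adj x₁ y → G.StrongAdj x₂ y) ∨ ∀ y ∈ B, G.Adj x₂ y → G.StrongAdj x₁ y) :
    ∃ A₁' A₂' B₁' B₂', G.IsDoubleSplit A B A₁' A₂' B₁' B₂' := by
  obtain ⟨y₀, hy₀, h | h⟩ := exists_anticomplete_of_nested hAB hA hA₂ hrow hnest
  · exact exists_isDoubleSplit_of_anticomplete hAB hA hd hA₁ hrow hcol hnest hy₀ h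
  · exact exists_isDoubleSplit_of_anticomplete hAB ((Set.union_comm _ _).trans hA) hd.symm hA₂
      hrow hcol (fun x₂ hx₂ x₁ hx₁ => (hnest x₁ hx₁ x₂ hx₂).symm) hy₀ h

lemma nontrivial_of_mixed (hAB : Disjoint A B)
    (hA : A.Nontrivial) (hB : B.Nonempty)
    (hrow : ∀ x ∈ A, ¬ G.StronglyComplete {x} B ∧ ¬ G.StronglyAnticomplete {x} B) :
    B.Nontrivial := by
  by_contra hB'
  obtain ⟨y, hy⟩ := hB
  rw [Set.not_nontrivial_iff] at hB'
  rw [hB'.eq_singleton_of_mem hy] at hrow hAB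
  have hθ : ∀ x ∈ A, G.θ y x = 0 := fun x hx => by
    have := hrow x hx
    simp only [stronglyComplete_singleton_left, stronglyAnticomplete_singleton_left,
      Set.mem_singleton_iff, forall_eq, StrongAdj, StrongAntiAdj] at this
    rw [G.symm]
    rcases G.range_mem x y with h | h | h <;> simp_all
  obtain ⟨x₁, hx₁, x₂, hx₂, hne⟩ := hA
  exact G.semi_matching y x₁ x₂ (hAB.ne_of_mem hx₁ rfl).symm (hAB.ne_of_mem hx₂ rfl).symm hne
    (hθ x₁ hx₁) (hθ x₂ hx₂)

end DoubleSplit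

section Splits

variable {G : Trigraph V} {G' : Trigraph V'} {I : V' → Set V} {a b : V'}

lemma IsThickening.isLocalSplit_of_pure (hI : G.IsThickening G' I) (hab : G'.SemiAdj a b)
    {A₁ A₂ : Set V} (h₁ : A₁.Nonempty) (h₂ : A₂.Nonempty) (hA : A₁ ∪ A₂ = I a)
    (hd : Disjoint A₁ A₂)
    (hpure : G.StronglyComplete A₁ (I b) ∨ G.StronglyAnticomplete A₁ (I b)) :
    IsLocalSplit G I a b ![A₁, A₂, I b] ![a, a, b] := by
  have hA₁ : A₁ ⊆ I a := hA ▸ Set.subset_union_left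
  have hA₂ : A₂ ⊆ I a := hA ▸ Set.subset_union_right
  have hab' : Disjoint (I a) (I b) := hI.disjoint hab.1
  have hcl : G.StronglyComplete A₁ A₂ := fun x hx y hy =>
    hI.isStrongClique a (hA₁ hx) (hA₂ hy) (hd.ne_of_mem hx hy)
  have hb : ∀ k : Fin 3, ![a, a, b] k = b → k = 2 := by
    intro k hk; fin_cases k <;> simp_all [hab.1]
  refine ⟨?_, ?_, ?_, ?_, ?_, ⟨![0, 2, 1], ?_⟩, ?_, ?_, ?_⟩
  · intro k; fin_cases k <;> simp
  · intro k; fin_cases k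
    exacts [h₁, h₂, hI.nonempty b]
  · intro k; fin_cases k
    exacts [hA₁, hA₂, subset_rfl]
  · intro k k' hkk'
    fin_cases k <;> fin_cases k' <;> first | exact absurd rfl hkk' | skip
    exacts [hd, hab'.mono_left hA₁, hd.symm, hab'.mono_left hA₂, (hab'.mono_left hA₁).symm,
      (hab'.mono_left hA₂).symm]
  · rintro x (hx | hx)
    · rw [← hA] at hx
      rcases hx with hx | hx
      exacts [⟨0, hx⟩, ⟨1, hx⟩]
    · exact ⟨2, hx⟩
  · intro k k' hkk' hp
    fin_cases k <;> fin_cases k' <;> first | exact absurd rfl hkk' | exact absurd rfl hp | skip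
    exacts [Or.inl hcl, hpure, Or.inl hcl.symm,
      hpure.imp StronglyComplete.symm StronglyAnticomplete.symm]
  · intro k hk
    obtain rfl := hb k hk
    exact hI.mixed hab
  · intro _ _ k₃ k₄ _ _ h₃ h₄ _ h
    exact absurd ((hb k₃ h₃).trans (hb k₄ h₄).symm) h
  · intro _ _ k₃ k₄ _ _ h₃ h₄ _ h
    exact absurd ((hb k₃ h₃).trans (hb k₄ h₄).symm) h

lemma IsDoubleSplit.isLocalSplit {A₁ A₂ B₁ B₂ : Set V}
    (h : G.IsDoubleSplit (I a) (I b) A₁ A₂ B₁ B₂) (hI : G.IsThickening G' I)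
    (hab : G'.SemiAdj a b) : IsLocalSplit G I a b ![A₁, A₂, B₁, B₂] ![a, a, b, b] := by
  obtain ⟨hA₁, hA₂, hB₁, hB₂, hA, hAd, hB, hBd, h₁₂, h₂₁, h₁₁, h₂₂⟩ := h
  have sA₁ : A₁ ⊆ I a := hA ▸ Set.subset_union_left
  have sA₂ : A₂ ⊆ I a := hA ▸ Set.subset_union_right
  have sB₁ : B₁ ⊆ I b := hB ▸ Set.subset_union_left
  have sB₂ : B₂ ⊆ I b := hB ▸ Set.subset_union_right
  have hab' : Disjoint (I a) (I b) := hI.disjoint hab.1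
  have hclA : G.StronglyComplete A₁ A₂ := fun x hx y hy =>
    hI.isStrongClique a (sA₁ hx) (sA₂ hy) (hAd.ne_of_mem hx hy)
  have hclB : G.StronglyComplete B₁ B₂ := fun x hx y hy =>
    hI.isStrongClique b (sB₁ hx) (sB₂ hy) (hBd.ne_of_mem hx hy)
  have only_A₂ : ∀ k k', ![a, a, b, b] k = a → ![a, a, b, b] k' = b →
      G.StronglyComplete (![A₁, A₂, B₁, B₂] k) (![A₁, A₂, B₁, B₂] k') → k = 1 := by
    intro k k' hk hk' h
    fin_cases k <;> fin_cases k' <;>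
      first | exact absurd hk hab.1.symm | exact absurd hk' hab.1 | rfl | skip
    exacts [(h₁₁.1 h).elim, (h.not_stronglyAnticomplete hA₁ hB₂ h₁₂).elim]
  have only_A₁ : ∀ k k', ![a, a, b, b] k = a → ![a, a, b, b] k' = b →
      G.StronglyAnticomplete (![A₁, A₂, B₁, B₂] k) (![A₁, A₂, B₁, B₂] k') → k = 0 := by
    intro k k' hk hk' h
    fin_cases k <;> fin_cases k' <;>
      first | exact absurd hk hab.1.symm | exact absurd hk' hab.1 | rfl | skip
    exacts [(h₂₁.not_stronglyAnticomplete hA₂ hB₁ h).elim, (h₂₂.2 h).elim]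
  refine ⟨?_, ?_, ?_, ?_, ?_, ⟨![2, 3, 0, 1], ?_⟩, ?_, ?_, ?_⟩
  · intro k; fin_cases k <;> simp
  · intro k; fin_cases k
    exacts [hA₁, hA₂, hB₁, hB₂]
  · intro k; fin_cases k
    exacts [sA₁, sA₂, sB₁, sB₂]
  · intro k k' hkk'
    fin_cases k <;> fin_cases k' <;> first | exact absurd rfl hkk' | skip
    exacts [hAd, hab'.mono sA₁ sB₁, hab'.mono sA₁ sB₂, hAd.symm, hab'.mono sA₂ sB₁,
      hab'.mono sA₂ sB₂, (hab'.mono sA₁ sB₁).symm, (hab'.mono sA₂ sB₁).symm, hBd,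
      (hab'.mono sA₁ sB₂).symm, (hab'.mono sA₂ sB₂).symm, hBd.symm]
  · rintro x (hx | hx)
    · rw [← hA] at hx
      rcases hx with hx | hx
      exacts [⟨0, hx⟩, ⟨1, hx⟩]
    · rw [← hB] at hx
      rcases hx with hx | hx
      exacts [⟨2, hx⟩, ⟨3, hx⟩]
  · intro k k' hkk' hp
    fin_cases k <;> fin_cases k' <;> first | exact absurd rfl hkk' | exact absurd rfl hp | skip
    exacts [Or.inl hclA, Or.inr h₁₂, Or.inl hclA.symm, Or.inl h₂₁, Or.inl h₂₁.symm,
      Or.inl hclB, Or.inr h₁₂.symm, Or.inl hclB.symm]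
  · intro k hk
    fin_cases k <;> first | exact absurd hk hab.1 | skip
    exacts [⟨fun h => h₁₁.1 (h.mono sA₁ subset_rfl), fun h => h₁₁.2 (h.mono sA₁ subset_rfl)⟩,
      ⟨fun h => h₂₂.1 (h.mono sA₂ subset_rfl), fun h => h₂₂.2 (h.mono sA₂ subset_rfl)⟩]
  · intro k₁ k₂ k₃ k₄ h₁ h₂ h₃ h₄ hne _ h
    exact hne ((only_A₂ k₁ k₃ h₁ h₃ h.1).trans (only_A₂ k₂ k₄ h₂ h₄ h.2).symm)
  · intro k₁ k₂ k₃ k₄ h₁ h₂ h₃ h₄ hne _ h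
    exact hne ((only_A₁ k₁ k₃ h₁ h₃ h.1).trans (only_A₁ k₂ k₄ h₂ h₄ h.2).symm)

end Splits

namespace OptimalAntithickening

variable [Finite V'] {G : Trigraph V} {G' : Trigraph V'} {I : V' → Set V} {a b : V'}

lemma not_pure_vertex (hopt : G.OptimalAntithickening G' I) (hab : G'.SemiAdj a b)
    (hnt : (I a).Nontrivial) {x : V} (hx : x ∈ I a) :
    ¬ G.StronglyComplete {x} (I b) ∧ ¬ G.StronglyAnticomplete {x} (I b) := by
  obtain ⟨x', hx', hne⟩ := hnt.exists_ne x
  have hsplit := fun hpure => hopt.not_isLocalSplit hab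
    (hopt.1.isLocalSplit_of_pure hab (A₂ := I a \ {x}) (Set.singleton_nonempty x)
      ⟨x', hx', hne⟩ (Set.union_sdiff_cancel (Set.singleton_subset_iff.2 hx))
      Set.disjoint_sdiff_right hpure) (by simp)
  exact ⟨fun h => hsplit (Or.inl h), fun h => hsplit (Or.inr h)⟩

lemma squareMeets [Finite V] (hopt : G.OptimalAntithickening G' I) (hab : G'.SemiAdj a b)
    {A₁ A₂ : Set V} (h₁ : A₁.Nonempty) (h₂ : A₂.Nonempty) (hA : A₁ ∪ A₂ = I a)
    (hd : Disjoint A₁ A₂) : G.SquareMeets (I a ∪ I b) A₁ A₂ := by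
  by_contra hno
  have hI := hopt.1
  have hAB := hI.disjoint hab.1
  have hA₁ : A₁ ⊆ I a := hA ▸ Set.subset_union_left
  have hA₂ : A₂ ⊆ I a := hA ▸ Set.subset_union_right
  obtain ⟨x₁, hx₁⟩ := h₁
  obtain ⟨x₂, hx₂⟩ := h₂
  have hnt : (I a).Nontrivial := ⟨x₁, hA₁ hx₁, x₂, hA₂ hx₂, hd.ne_of_mem hx₁ hx₂⟩
  have hrow := fun x hx => hopt.not_pure_vertex hab hnt (x := x) hx
  have hcol : ∀ y ∈ I b, ¬ G.StronglyComplete (I a) {y} ∧ ¬ G.StronglyAnticomplete (I a) {y} :=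
    fun y hy => by
      have := hopt.not_pure_vertex hab.symm (nontrivial_of_mixed hAB hnt (hI.nonempty b) hrow) hy
      exact ⟨fun h => this.1 h.symm, fun h => this.2 h.symm⟩
  obtain ⟨_, _, _, _, h⟩ := exists_isDoubleSplit hAB hA hd ⟨x₁, hx₁⟩ ⟨x₂, hx₂⟩ hrow hcol
    fun _ hx₁ _ hx₂ => nested_of_not_squareMeets (hI.isStrongClique a) (hI.isStrongClique b) hAB
      hA₁ hA₂ hd hno hx₁ hx₂
  exact hopt.not_isLocalSplit hab (h.isLocalSplit hI hab) (by simp)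

end OptimalAntithickening

end Trigraph

theorem semiedge_image_squareConnected_general {V V' : Type} [Fintype V] [Fintype V']
    (G : Trigraph V) (G' : Trigraph V') (I : V' → Set V) (hopt : G.OptimalAntithickening G' I)
    (a b : V') (hab : G'.SemiAdj a b) :
    (∃ x y : V, I a = {x} ∧ I b = {y} ∧ G.SemiAdj x y) ∨
      G.SquareConnected (I a) (I b) := by
  by_cases hsing : ∃ x y, I a = {x} ∧ I b = {y}
  · obtain ⟨x, y, hx, hy⟩ := hsing
    exact Or.inl ⟨x, y, hx, hy, hopt.1.semiAdj_of_eq_singleton hab hx hy⟩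
  · refine Or.inr ⟨hopt.1.hposc_of_semiAdj hab hsing, fun A₁ A₂ h₁ h₂ hA hd => ?_,
      fun B₁ B₂ h₁ h₂ hB hd => ?_⟩
    · exact hopt.squareMeets hab h₁ h₂ hA hd
    · rw [Set.union_comm]
      exact hopt.squareMeets hab.symm h₁ h₂ hB hd

/-- In an optimal antithickening of a connected non-degenerate trigraph,
the preimage of any semiedge is either a semiedge of G or a square-connected homogeneous
pair of strong cliques of G. -/
theorem semiedge_image_squareConnected {V V' : Type} [Fintype V] [Fintype V']
    (G : Trigraph V) (hconn : G.Connected) (hnd : G.NonDegenerate)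
    (G' : Trigraph V') (I : V' → Set V) (hopt : G.OptimalAntithickening G' I)
    (a b : V') (hab : G'.SemiAdj a b) :
    (∃ x y : V, I a = {x} ∧ I b = {y} ∧ G.SemiAdj x y) ∨
      G.SquareConnected (I a) (I b) :=
  semiedge_image_squareConnected_general G G' I hopt a b hab
end

section
/- Let G be a connected non-degenerate trigraph, and let (A1, B1) and (A2, B2) be inclusion-maximal square-connected homogeneous pairs of strong cliques of G (that is, there is no square-connected homogeneous pair of strong cliques (A', B') ≠ (Ai, Bi) with Ai ⊆ A' and Bi ⊆ B'). Then either (A2, B2) = (A1, B1), or (A2, B2) = (B1, A1), or the sets A1 ∪ B1 and A2 ∪ B2 are disjoint. -/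
section AuxTrigraphProof

variable {V : Type} {G : Trigraph V}

private lemma adj_symm' {u v : V} (h : G.Adj u v) : G.Adj v u :=
  ⟨h.1.symm, by rw [G.symm v u]; exact h.2⟩

private lemma antiAdj_symm' {u v : V} (h : G.AntiAdj u v) : G.AntiAdj v u :=
  ⟨h.1.symm, by rw [G.symm v u]; exact h.2⟩

private lemma square_mixed {A B : Set V} (hA : G.IsStrongClique A) (hB : G.IsStrongClique B)
    {v1 v2 v3 v4 : V} (hsq : G.IsSquare v1 v2 v3 v4)
    (hsub : ({v1, v2, v3, v4} : Set V) ⊆ A ∪ B) {a : V} (ha : a ∈ A)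
    (hmem : a ∈ ({v1, v2, v3, v4} : Set V)) :
    (∃ b ∈ B, G.AntiAdj a b) ∧ ∃ b ∈ B, G.Adj a b := by
  obtain ⟨h13, h24, h12, h23, h34, h41⟩ := hsq
  have opp : ∀ {x y : V}, G.AntiAdj x y → x ∈ A → y ∈ A ∪ B → y ∈ B := by
    intro x y hxy hx hy
    rcases hy with hy | hy
    · exfalso
      have h1 : G.θ x y = 1 := hA hx hy hxy.1
      rcases hxy.2 with h | h <;> omega
    · exact hy
  have m1 : v1 ∈ A ∪ B := hsub (by simp)
  have m2 : v2 ∈ A ∪ B := hsub (by simp)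
  have m3 : v3 ∈ A ∪ B := hsub (by simp)
  have m4 : v4 ∈ A ∪ B := hsub (by simp)
  simp only [Set.mem_insert_iff, Set.mem_singleton_iff] at hmem
  rcases hmem with rfl | rfl | rfl | rfl
  · refine ⟨⟨v3, opp h13 ha m3, h13⟩, ?_⟩
    rcases m2 with h | h
    · exact ⟨v4, opp h24 h m4, adj_symm' h41⟩
    · exact ⟨v2, h, h12⟩
  · refine ⟨⟨v4, opp h24 ha m4, h24⟩, ?_⟩
    rcases m1 with h | h
    · exact ⟨v3, opp h13 h m3, h23⟩
    · exact ⟨v1, h, adj_symm' h12⟩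
  · refine ⟨⟨v1, opp (antiAdj_symm' h13) ha m1, antiAdj_symm' h13⟩, ?_⟩
    rcases m2 with h | h
    · exact ⟨v4, opp h24 h m4, h34⟩
    · exact ⟨v2, h, adj_symm' h23⟩
  · refine ⟨⟨v2, opp (antiAdj_symm' h24) ha m2, antiAdj_symm' h24⟩, ?_⟩
    rcases m3 with h | h
    · exact ⟨v1, opp (antiAdj_symm' h13) h m1, h41⟩
    · exact ⟨v3, h, adj_symm' h34⟩

private lemma sc_nontrivialA {A B : Set V} (h : G.SquareConnected A B) {a : V} (ha : a ∈ A) :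
    ∃ a' ∈ A, a' ≠ a := by
  by_contra hno
  push_neg at hno
  obtain ⟨b, hb⟩ := h.1.2.1
  have hb' : ∃ b' ∈ B, b' ≠ b := by
    by_contra hno2
    push_neg at hno2
    exact h.1.2.2.2.2.2.1 ⟨a, b, Set.eq_singleton_iff_unique_mem.2 ⟨ha, hno⟩,
      Set.eq_singleton_iff_unique_mem.2 ⟨hb, hno2⟩⟩
  obtain ⟨b', hb'B, hbb⟩ := hb'
  have hun : {b} ∪ (B \ {b}) = B := by
    rw [Set.singleton_union, Set.insert_diff_singleton, Set.insert_eq_self.2 hb]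
  have hsm := h.2.2 {b} (B \ {b}) ⟨b, rfl⟩ ⟨b', hb'B, hbb⟩ hun Set.disjoint_sdiff_right
  obtain ⟨v1, v2, v3, v4, hsq, hsub, -, -⟩ := hsm
  obtain ⟨h13, h24, h12, h23, h34, h41⟩ := hsq
  have hAc := h.1.2.2.2.1
  have hBc := h.1.2.2.2.2.1
  have e1 : v1 ∈ A ∨ v3 ∈ A := by
    rcases hsub (show v1 ∈ ({v1, v2, v3, v4} : Set V) by simp) with h' | h'
    · exact Or.inl h'
    rcases hsub (show v3 ∈ ({v1, v2, v3, v4} : Set V) by simp) with h'' | h''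
    · exact Or.inr h''
    · exfalso
      have hx : G.θ v1 v3 = 1 := hBc h' h'' h13.1
      rcases h13.2 with hh | hh <;> omega
  have e2 : v2 ∈ A ∨ v4 ∈ A := by
    rcases hsub (show v2 ∈ ({v1, v2, v3, v4} : Set V) by simp) with h' | h'
    · exact Or.inl h'
    rcases hsub (show v4 ∈ ({v1, v2, v3, v4} : Set V) by simp) with h'' | h''
    · exact Or.inr h''
    · exfalso
      have hx : G.θ v2 v4 = 1 := hBc h' h'' h24.1
      rcases h24.2 with hh | hh <;> omega
  rcases e1 with h' | h' <;> rcases e2 with h'' | h''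
  · exact h12.1 ((hno _ h').trans (hno _ h'').symm)
  · exact h41.1 ((hno _ h'').trans (hno _ h').symm)
  · exact h23.1 ((hno _ h'').trans (hno _ h').symm)
  · exact h34.1 ((hno _ h').trans (hno _ h'').symm)

private lemma sc_mixed {A B : Set V} (h : G.SquareConnected A B) {a : V} (ha : a ∈ A) :
    (∃ b ∈ B, G.AntiAdj a b) ∧ ∃ b ∈ B, G.Adj a b := by
  obtain ⟨a', ha', hne⟩ := sc_nontrivialA h ha
  have hun : {a} ∪ (A \ {a}) = A := by
    rw [Set.singleton_union, Set.insert_diff_singleton, Set.insert_eq_self.2 ha]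
  have hsm := h.2.1 {a} (A \ {a}) ⟨a, rfl⟩ ⟨a', ha', hne⟩ hun Set.disjoint_sdiff_right
  obtain ⟨v1, v2, v3, v4, hsq, hsub, hm, -⟩ := hsm
  obtain ⟨w, hw1, hw2⟩ := hm
  have hwa : w = a := hw2
  exact square_mixed h.1.2.2.2.1 h.1.2.2.2.2.1 hsq hsub ha (hwa ▸ hw1)

private lemma hposc_swap {A B : Set V} (h : G.HPOSC A B) : G.HPOSC B A := by
  obtain ⟨h1, h2, h3, h4, h5, h6, h7⟩ := h
  refine ⟨h2, h1, h3.symm, h5, h4, ?_, ?_⟩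
  · rintro ⟨b, a, hb, ha⟩; exact h6 ⟨a, b, ha, hb⟩
  · intro v hv
    have := h7 v (by rwa [Set.union_comm])
    exact ⟨this.2, this.1⟩

private lemma sc_swap {A B : Set V} (h : G.SquareConnected A B) : G.SquareConnected B A := by
  obtain ⟨h1, h2, h3⟩ := h
  refine ⟨hposc_swap h1, ?_, ?_⟩
  · intro B' B'' n1 n2 hu hd
    have := h3 B' B'' n1 n2 hu hd
    rwa [Set.union_comm] at this
  · intro A' A'' n1 n2 hu hd
    have := h2 A' A'' n1 n2 hu hd
    rwa [Set.union_comm] at this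

private lemma max_swap {A B : Set V} (h : G.MaxSquareConnected A B) :
    G.MaxSquareConnected B A := by
  obtain ⟨h1, h2⟩ := h
  refine ⟨sc_swap h1, ?_⟩
  intro A' B' hsc hBA hAB
  obtain ⟨e1, e2⟩ := h2 B' A' (sc_swap hsc) hAB hBA
  exact ⟨e2, e1⟩

private lemma sm_mono {X X' S1 S1' S2 S2' : Set V} (h : G.SquareMeets X S1 S2)
    (hX : X ⊆ X') (h1 : S1 ⊆ S1') (h2 : S2 ⊆ S2') : G.SquareMeets X' S1' S2' := by
  obtain ⟨v1, v2, v3, v4, hsq, hsub, hm1, hm2⟩ := h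
  exact ⟨v1, v2, v3, v4, hsq, hsub.trans hX,
    hm1.mono (Set.inter_subset_inter_right _ h1),
    hm2.mono (Set.inter_subset_inter_right _ h2)⟩

private lemma core_skew {V : Type} [Fintype V] {G : Trigraph V} (hconn : G.Connected)
    (hnd : G.NonDegenerate) {A1 B1 A2 B2 : Set V}
    (h1 : G.SquareConnected A1 B1) (h2 : G.SquareConnected A2 B2)
    {a c : V} (haA1 : a ∈ A1) (haA2 : a ∈ A2) (hcA1 : c ∈ A1) (hcB2 : c ∈ B2) : False := by
  classical
  have d1 : Disjoint A1 B1 := h1.1.2.2.1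
  have d2 : Disjoint A2 B2 := h2.1.2.2.1
  have cl1A := h1.1.2.2.2.1
  have cl1B := h1.1.2.2.2.2.1
  have cl2A := h2.1.2.2.2.1
  have cl2B := h2.1.2.2.2.2.1
  have hom1 := h1.1.2.2.2.2.2.2
  have hom2 := h2.1.2.2.2.2.2.2
  have hac : G.θ a c = 1 :=
    cl1A haA1 hcA1 (fun e => Set.disjoint_left.1 d2 haA2 (by rw [e]; exact hcB2))
  obtain ⟨⟨b2, hb2B2, hab2⟩, -⟩ := sc_mixed h2 haA2
  have hab2' : G.θ a b2 = 0 ∨ G.θ a b2 = -1 := hab2.2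
  have hb2X1 : b2 ∈ A1 ∪ B1 := by
    by_contra hout
    obtain ⟨hpA, hpB⟩ := hom1 b2 hout
    rcases hpA with hcomp | hanti
    · have h1' : G.θ b2 a = 1 := hcomp b2 rfl a haA1
      have hs := G.symm a b2
      rcases hab2' with h' | h' <;> omega
    · have h1' : G.θ b2 c = -1 := hanti b2 rfl c hcA1
      have h2' : G.θ b2 c = 1 := cl2B hb2B2 hcB2 (fun e => hout (by rw [e]; exact Or.inl hcA1))
      omega
  have hb2A1 : b2 ∉ A1 := by
    intro hmem
    have h1' : G.θ a b2 = 1 := cl1A haA1 hmem hab2.1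
    rcases hab2' with h' | h' <;> omega
  have hb2B1 : b2 ∈ B1 := hb2X1.resolve_left hb2A1
  obtain ⟨⟨p, hpA2, hcp⟩, -⟩ := sc_mixed (sc_swap h2) hcB2
  have hcp' : G.θ c p = 0 ∨ G.θ c p = -1 := hcp.2
  have hap_ne : a ≠ p := by
    rintro rfl
    have hs := G.symm c a
    rcases hcp' with h' | h' <;> omega
  have hpX1 : p ∈ A1 ∪ B1 := by
    by_contra hout
    obtain ⟨hpA, hpB⟩ := hom1 p hout
    rcases hpA with hcomp | hanti
    · have h1' : G.θ p c = 1 := hcomp p rfl c hcA1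
      have hs := G.symm c p
      rcases hcp' with h' | h' <;> omega
    · have h1' : G.θ p a = -1 := hanti p rfl a haA1
      have h2' : G.θ p a = 1 := cl2A hpA2 haA2 (fun e => hap_ne e.symm)
      omega
  have hpA1 : p ∉ A1 := by
    intro hmem
    have h1' : G.θ c p = 1 := cl1A hcA1 hmem hcp.1
    rcases hcp' with h' | h' <;> omega
  have hpB1 : p ∈ B1 := hpX1.resolve_left hpA1
  have hap : G.θ a p = 1 := cl2A haA2 hpA2 hap_ne
  have hpb2 : G.θ p b2 = 1 :=
    cl1B hpB1 hb2B1 (fun e => Set.disjoint_left.1 d2 hpA2 (by rw [e]; exact hb2B2))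
  have hcb2 : G.θ c b2 = 1 :=
    cl2B hcB2 hb2B2 (fun e => Set.disjoint_left.1 d1 hcA1 (by rw [e]; exact hb2B1))
  -- private vertices of pair 2 are strongly complete to X1
  have hA2out : ∀ u ∈ A2, u ∉ A1 ∪ B1 → (∀ w ∈ A1, G.θ u w = 1) ∧ (∀ w ∈ B1, G.θ u w = 1) := by
    intro u hu hout
    obtain ⟨hpA, hpB⟩ := hom1 u hout
    constructor
    · rcases hpA with h | h
      · exact fun w hw => h u rfl w hw
      · exfalso
        have h1' : G.θ u a = -1 := h u rfl a haA1
        have h2' : G.θ u a = 1 := cl2A hu haA2 (fun e => hout (by rw [e]; exact Or.inl haA1))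
        omega
    · rcases hpB with h | h
      · exact fun w hw => h u rfl w hw
      · exfalso
        have h1' : G.θ u p = -1 := h u rfl p hpB1
        have h2' : G.θ u p = 1 := cl2A hu hpA2 (fun e => hout (by rw [e]; exact Or.inr hpB1))
        omega
  have hB2out : ∀ u ∈ B2, u ∉ A1 ∪ B1 → (∀ w ∈ A1, G.θ u w = 1) ∧ (∀ w ∈ B1, G.θ u w = 1) := by
    intro u hu hout
    obtain ⟨hpA, hpB⟩ := hom1 u hout
    constructor
    · rcases hpA with h | h
      · exact fun w hw => h u rfl w hw
      · exfalso
        have h1' : G.θ u c = -1 := h u rfl c hcA1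
        have h2' : G.θ u c = 1 := cl2B hu hcB2 (fun e => hout (by rw [e]; exact Or.inl hcA1))
        omega
    · rcases hpB with h | h
      · exact fun w hw => h u rfl w hw
      · exfalso
        have h1' : G.θ u b2 = -1 := h u rfl b2 hb2B1
        have h2' : G.θ u b2 = 1 := cl2B hu hb2B2 (fun e => hout (by rw [e]; exact Or.inr hb2B1))
        omega
  -- the two cliques covering T = X1 ∪ X2
  have clK1 : G.IsStrongClique (A1 ∪ (A2 \ (A1 ∪ B1))) := by
    intro u hu v hv hne
    rcases hu with hu | hu <;> rcases hv with hv | hv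
    · exact cl1A hu hv hne
    · show G.θ u v = 1
      rw [G.symm u v]
      exact (hA2out v hv.1 hv.2).1 u hu
    · exact (hA2out u hu.1 hu.2).1 v hv
    · exact cl2A hu.1 hv.1 hne
  have clK2 : G.IsStrongClique (B1 ∪ (B2 \ (A1 ∪ B1))) := by
    intro u hu v hv hne
    rcases hu with hu | hu <;> rcases hv with hv | hv
    · exact cl1B hu hv hne
    · show G.θ u v = 1
      rw [G.symm u v]
      exact (hB2out v hv.1 hv.2).2 u hu
    · exact (hB2out u hu.1 hu.2).2 v hv
    · exact cl2B hu.1 hv.1 hne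
  have coverT : ∀ v ∈ (A1 ∪ B1) ∪ (A2 ∪ B2),
      v ∈ A1 ∪ (A2 \ (A1 ∪ B1)) ∨ v ∈ B1 ∪ (B2 \ (A1 ∪ B1)) := by
    intro v hv
    rcases hv with (h | h) | (h | h)
    · exact Or.inl (Or.inl h)
    · exact Or.inr (Or.inl h)
    · by_cases hx : v ∈ A1 ∪ B1
      · rcases hx with hx | hx
        · exact Or.inl (Or.inl hx)
        · exact Or.inr (Or.inl hx)
      · exact Or.inl (Or.inr ⟨h, hx⟩)
    · by_cases hx : v ∈ A1 ∪ B1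
      · rcases hx with hx | hx
        · exact Or.inl (Or.inl hx)
        · exact Or.inr (Or.inl hx)
      · exact Or.inr (Or.inr ⟨h, hx⟩)
  have K1subT : A1 ∪ (A2 \ (A1 ∪ B1)) ⊆ (A1 ∪ B1) ∪ (A2 ∪ B2) := by
    rintro v (h | h)
    · exact Or.inl (Or.inl h)
    · exact Or.inr (Or.inl h.1)
  have K2subT : B1 ∪ (B2 \ (A1 ∪ B1)) ⊆ (A1 ∪ B1) ∪ (A2 ∪ B2) := by
    rintro v (h | h)
    · exact Or.inl (Or.inr h)
    · exact Or.inr (Or.inr h.1)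
  have aT : a ∈ (A1 ∪ B1) ∪ (A2 ∪ B2) := Or.inl (Or.inl haA1)
  have cT : c ∈ (A1 ∪ B1) ∪ (A2 ∪ B2) := Or.inl (Or.inl hcA1)
  have pT : p ∈ (A1 ∪ B1) ∪ (A2 ∪ B2) := Or.inl (Or.inr hpB1)
  -- vertices outside T are pure on T
  have pure_out : ∀ v, v ∉ (A1 ∪ B1) ∪ (A2 ∪ B2) →
      (∀ t ∈ (A1 ∪ B1) ∪ (A2 ∪ B2), G.θ v t = 1) ∨
      (∀ t ∈ (A1 ∪ B1) ∪ (A2 ∪ B2), G.θ v t = -1) := by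
    intro v hv
    have hv1 : v ∉ A1 ∪ B1 := fun h => hv (Or.inl h)
    have hv2 : v ∉ A2 ∪ B2 := fun h => hv (Or.inr h)
    obtain ⟨p1A, p1B⟩ := hom1 v hv1
    obtain ⟨p2A, p2B⟩ := hom2 v hv2
    rcases p1A with hA1c | hA1c
    · left
      have c1A : ∀ w ∈ A1, G.θ v w = 1 := fun w hw => hA1c v rfl w hw
      have c2A : ∀ w ∈ A2, G.θ v w = 1 := by
        rcases p2A with h | h
        · exact fun w hw => h v rfl w hw
        · exfalso
          have e1 : G.θ v a = -1 := h v rfl a haA2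
          have e2 := c1A a haA1
          omega
      have c1B : ∀ w ∈ B1, G.θ v w = 1 := by
        rcases p1B with h | h
        · exact fun w hw => h v rfl w hw
        · exfalso
          have e1 : G.θ v p = -1 := h v rfl p hpB1
          have e2 := c2A p hpA2
          omega
      have c2B : ∀ w ∈ B2, G.θ v w = 1 := by
        rcases p2B with h | h
        · exact fun w hw => h v rfl w hw
        · exfalso
          have e1 : G.θ v c = -1 := h v rfl c hcB2
          have e2 := c1A c hcA1
          omega
      rintro t ((h | h) | (h | h))
      exacts [c1A t h, c1B t h, c2A t h, c2B t h]
    · right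
      have c1A : ∀ w ∈ A1, G.θ v w = -1 := fun w hw => hA1c v rfl w hw
      have c2A : ∀ w ∈ A2, G.θ v w = -1 := by
        rcases p2A with h | h
        · exfalso
          have e1 : G.θ v a = 1 := h v rfl a haA2
          have e2 := c1A a haA1
          omega
        · exact fun w hw => h v rfl w hw
      have c1B : ∀ w ∈ B1, G.θ v w = -1 := by
        rcases p1B with h | h
        · exfalso
          have e1 : G.θ v p = 1 := h v rfl p hpB1
          have e2 := c2A p hpA2
          omega
        · exact fun w hw => h v rfl w hw
      have c2B : ∀ w ∈ B2, G.θ v w = -1 := by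
        rcases p2B with h | h
        · exfalso
          have e1 : G.θ v c = 1 := h v rfl c hcB2
          have e2 := c1A c hcA1
          omega
        · exact fun w hw => h v rfl w hw
      rintro t ((h | h) | (h | h))
      exacts [c1A t h, c1B t h, c2A t h, c2B t h]
  -- if there are no Y–Z edges, every outside vertex is complete to T
  have allY_of : (∀ y z : V, y ∉ (A1 ∪ B1) ∪ (A2 ∪ B2) →
        (∀ t ∈ (A1 ∪ B1) ∪ (A2 ∪ B2), G.θ y t = 1) →
        z ∉ (A1 ∪ B1) ∪ (A2 ∪ B2) →
        (∀ t ∈ (A1 ∪ B1) ∪ (A2 ∪ B2), G.θ z t = -1) → G.θ y z = -1) →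
      ∀ v, v ∉ (A1 ∪ B1) ∪ (A2 ∪ B2) → ∀ t ∈ (A1 ∪ B1) ∪ (A2 ∪ B2), G.θ v t = 1 := by
    intro YZ v hv
    rcases pure_out v hv with h | h
    · exact h
    exfalso
    have reach : ∀ w, Relation.ReflTransGen G.Adj v w →
        w ∉ (A1 ∪ B1) ∪ (A2 ∪ B2) ∧ ∀ t ∈ (A1 ∪ B1) ∪ (A2 ∪ B2), G.θ w t = -1 := by
      intro w hw
      induction hw with
      | refl => exact ⟨hv, h⟩
      | tail hst hstep ih =>
        rename_i w1 w2
        obtain ⟨hw1T, hw1anti⟩ := ih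
        have hw2T : w2 ∉ (A1 ∪ B1) ∪ (A2 ∪ B2) := by
          intro hmem
          have h1' := hw1anti w2 hmem
          rcases hstep.2 with h' | h' <;> omega
        rcases pure_out w2 hw2T with hY | hZ
        · exfalso
          have hyz := YZ w2 w1 hw2T hY hw1T hw1anti
          have hs := G.symm w1 w2
          rcases hstep.2 with h' | h' <;> omega
        · exact ⟨hw2T, hZ⟩
    exact (reach a (hconn v a)).1 aT
  have notboth : ∀ D : Set V, G.IsStrongClique D → c ∈ D → p ∈ D → False := by
    intro D hD hcD hpD
    have h1' : G.θ c p = 1 := hD hcD hpD hcp.1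
    rcases hcp' with h' | h' <;> omega
  rcases hnd with ⟨hql, hncb⟩ | ⟨hcf, S, hSst, hS3⟩
  · -- quasi-line, not cobipartite
    have YZ : ∀ y z : V, y ∉ (A1 ∪ B1) ∪ (A2 ∪ B2) →
        (∀ t ∈ (A1 ∪ B1) ∪ (A2 ∪ B2), G.θ y t = 1) →
        z ∉ (A1 ∪ B1) ∪ (A2 ∪ B2) →
        (∀ t ∈ (A1 ∪ B1) ∪ (A2 ∪ B2), G.θ z t = -1) → G.θ y z = -1 := by
      intro y z hy hyc hza' hza
      have hyz : y ≠ z := by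
        rintro rfl
        have h1' := hyc a aT
        have h2' := hza a aT
        omega
      obtain ⟨C1, C2, hC1, hC2, hN⟩ := hql y
      have hcN : c ∈ C1 ∪ C2 := by
        rw [← hN]
        exact ⟨fun e => hy (by rw [e]; exact cT), Or.inl (hyc c cT)⟩
      have hpN : p ∈ C1 ∪ C2 := by
        rw [← hN]
        exact ⟨fun e => hy (by rw [e]; exact pT), Or.inl (hyc p pT)⟩
      have zout : ∀ D : Set V, G.IsStrongClique D → (c ∈ D ∨ p ∈ D) → z ∉ D := by
        intro D hD hin hzD
        rcases hin with hin | hin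
        · have e1 : G.θ z c = 1 := hD hzD hin (fun e => hza' (by rw [e]; exact cT))
          have e2 := hza c cT
          omega
        · have e1 : G.θ z p = 1 := hD hzD hin (fun e => hza' (by rw [e]; exact pT))
          have e2 := hza p pT
          omega
      have hzN : z ∉ G.neighborhood y := by
        rw [show G.neighborhood y = C1 ∪ C2 from hN]
        rintro (hzC | hzC)
        · rcases hcN with hc' | hc'
          · exact zout C1 hC1 (Or.inl hc') hzC
          · rcases hpN with hp' | hp'
            · exact zout C1 hC1 (Or.inr hp') hzC
            · exact notboth C2 hC2 hc' hp'
        · rcases hcN with hc' | hc'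
          · rcases hpN with hp' | hp'
            · exact notboth C1 hC1 hc' hp'
            · exact zout C2 hC2 (Or.inr hp') hzC
          · exact zout C2 hC2 (Or.inl hc') hzC
      rcases G.range_mem y z with h' | h' | h'
      · exact absurd (show z ∈ G.neighborhood y from ⟨hyz, Or.inl h'⟩) hzN
      · exact absurd (show z ∈ G.neighborhood y from ⟨hyz, Or.inr h'⟩) hzN
      · exact h'
    have allY := allY_of YZ
    obtain ⟨C1, C2, hC1, hC2, hN⟩ := hql a
    have hcN : c ∈ C1 ∪ C2 := by
      rw [← hN]
      exact ⟨fun e => Set.disjoint_left.1 d2 haA2 (by rw [e]; exact hcB2), Or.inl hac⟩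
    have hpN : p ∈ C1 ∪ C2 := by
      rw [← hN]
      exact ⟨hap_ne, Or.inl hap⟩
    have final : ∀ D1 D2 : Set V, G.IsStrongClique D1 → G.IsStrongClique D2 →
        G.neighborhood a = D1 ∪ D2 → c ∈ D1 → p ∈ D2 → False := by
      intro D1 D2 hD1 hD2 hND hcD hpD
      apply hncb
      refine ⟨(A1 ∪ (A2 \ (A1 ∪ B1))) ∪ {v | v ∉ (A1 ∪ B1) ∪ (A2 ∪ B2) ∧ v ∈ D1},
        (B1 ∪ (B2 \ (A1 ∪ B1))) ∪ {v | v ∉ (A1 ∪ B1) ∪ (A2 ∪ B2) ∧ v ∈ D2 ∧ v ∉ D1},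
        ?_, ?_, ?_⟩
      · intro u hu v hv hne
        rcases hu with hu | hu <;> rcases hv with hv | hv
        · exact clK1 hu hv hne
        · show G.θ u v = 1
          rw [G.symm u v]
          exact allY v hv.1 u (K1subT hu)
        · exact allY u hu.1 v (K1subT hv)
        · exact hD1 hu.2 hv.2 hne
      · intro u hu v hv hne
        rcases hu with hu | hu <;> rcases hv with hv | hv
        · exact clK2 hu hv hne
        · show G.θ u v = 1
          rw [G.symm u v]
          exact allY v hv.1 u (K2subT hu)
        · exact allY u hu.1 v (K2subT hv)
        · exact hD2 hu.2.1 hv.2.1 hne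
      · apply Set.eq_univ_of_forall
        intro v
        by_cases hvT : v ∈ (A1 ∪ B1) ∪ (A2 ∪ B2)
        · rcases coverT v hvT with h' | h'
          · exact Or.inl (Or.inl h')
          · exact Or.inr (Or.inl h')
        · have hvN : v ∈ D1 ∪ D2 := by
            rw [← hND]
            refine ⟨fun e => hvT (by rw [← e]; exact aT), Or.inl ?_⟩
            rw [G.symm a v]
            exact allY v hvT a aT
          by_cases hvD1 : v ∈ D1
          · exact Or.inl (Or.inr ⟨hvT, hvD1⟩)
          · rcases hvN with h' | h'
            · exact absurd h' hvD1
            · exact Or.inr (Or.inr ⟨hvT, h', hvD1⟩)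
    rcases hcN with hc' | hc' <;> rcases hpN with hp' | hp'
    · exact notboth C1 hC1 hc' hp'
    · exact final C1 C2 hC1 hC2 hN hc' hp'
    · exact final C2 C1 hC2 hC1 (by rw [hN, Set.union_comm]) hc' hp'
    · exact notboth C2 hC2 hc' hp'
  · -- claw-free with a stable set of size ≥ 3
    have YZ : ∀ y z : V, y ∉ (A1 ∪ B1) ∪ (A2 ∪ B2) →
        (∀ t ∈ (A1 ∪ B1) ∪ (A2 ∪ B2), G.θ y t = 1) →
        z ∉ (A1 ∪ B1) ∪ (A2 ∪ B2) →
        (∀ t ∈ (A1 ∪ B1) ∪ (A2 ∪ B2), G.θ z t = -1) → G.θ y z = -1 := by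
      intro y z hy hyc hz hza
      have hyz : y ≠ z := by
        rintro rfl
        have h1' := hyc a aT
        have h2' := hza a aT
        omega
      by_cases hadj : G.Adj y z
      · exact absurd
          (⟨y, z, c, p, hadj,
            ⟨fun e => hy (by rw [e]; exact cT), Or.inl (hyc c cT)⟩,
            ⟨fun e => hy (by rw [e]; exact pT), Or.inl (hyc p pT)⟩,
            ⟨fun e => hz (by rw [e]; exact cT), Or.inr (hza c cT)⟩,
            ⟨fun e => hz (by rw [e]; exact pT), Or.inr (hza p pT)⟩, hcp⟩ :
            ∃ v a' b' c' : V, G.Adj v a' ∧ G.Adj v b' ∧ G.Adj v c' ∧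
              G.AntiAdj a' b' ∧ G.AntiAdj a' c' ∧ G.AntiAdj b' c') hcf
      · rcases G.range_mem y z with h' | h' | h'
        · exact absurd ⟨hyz, Or.inl h'⟩ hadj
        · exact absurd ⟨hyz, Or.inr h'⟩ hadj
        · exact h'
    have allY := allY_of YZ
    have hfin : S.Finite := Set.toFinite S
    have hcard : 3 ≤ hfin.toFinset.card := by
      rwa [← Set.ncard_eq_toFinset_card S hfin]
    obtain ⟨s1, hs1⟩ := Finset.card_pos.1 (by omega : 0 < hfin.toFinset.card)
    obtain ⟨s2, hs2⟩ := Finset.card_pos.1 (by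
      rw [Finset.card_erase_of_mem hs1]; omega : 0 < (hfin.toFinset.erase s1).card)
    obtain ⟨s3, hs3⟩ := Finset.card_pos.1 (by
      rw [Finset.card_erase_of_mem hs2, Finset.card_erase_of_mem hs1]; omega :
      0 < ((hfin.toFinset.erase s1).erase s2).card)
    obtain ⟨hs21, hs2S⟩ := Finset.mem_erase.1 hs2
    obtain ⟨hs32, hs3'⟩ := Finset.mem_erase.1 hs3
    obtain ⟨hs31, hs3S⟩ := Finset.mem_erase.1 hs3'
    have m1 : s1 ∈ S := hfin.mem_toFinset.1 hs1
    have m2 : s2 ∈ S := hfin.mem_toFinset.1 hs2S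
    have m3 : s3 ∈ S := hfin.mem_toFinset.1 hs3S
    have a12 : G.AntiAdj s1 s2 := hSst m1 m2 (Ne.symm hs21)
    have a13 : G.AntiAdj s1 s3 := hSst m1 m3 (Ne.symm hs31)
    have a23 : G.AntiAdj s2 s3 := hSst m2 m3 (Ne.symm hs32)
    have hadjYT : ∀ u w : V, u ∉ (A1 ∪ B1) ∪ (A2 ∪ B2) → w ∈ (A1 ∪ B1) ∪ (A2 ∪ B2) →
        G.AntiAdj u w → False := by
      intro u w hu hw hanti
      have e1 := allY u hu w hw
      rcases hanti.2 with h' | h' <;> omega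
    by_cases hT1 : s1 ∈ (A1 ∪ B1) ∪ (A2 ∪ B2)
    · by_cases hT2 : s2 ∈ (A1 ∪ B1) ∪ (A2 ∪ B2)
      · by_cases hT3 : s3 ∈ (A1 ∪ B1) ∪ (A2 ∪ B2)
        · have noK : ∀ D : Set V, G.IsStrongClique D → ∀ u w : V,
              G.AntiAdj u w → u ∈ D → w ∈ D → False := by
            intro D hD u w hanti hu hw
            have h1' : G.θ u w = 1 := hD hu hw hanti.1
            rcases hanti.2 with h' | h' <;> omega
          rcases coverT s1 hT1 with k1 | k1 <;> rcases coverT s2 hT2 with k2 | k2 <;>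
            rcases coverT s3 hT3 with k3 | k3
          · exact noK _ clK1 s1 s2 a12 k1 k2
          · exact noK _ clK1 s1 s2 a12 k1 k2
          · exact noK _ clK1 s1 s3 a13 k1 k3
          · exact noK _ clK2 s2 s3 a23 k2 k3
          · exact noK _ clK1 s2 s3 a23 k2 k3
          · exact noK _ clK2 s1 s3 a13 k1 k3
          · exact noK _ clK2 s1 s2 a12 k1 k2
          · exact noK _ clK2 s1 s2 a12 k1 k2
        · exact hadjYT s3 s1 hT3 hT1 (antiAdj_symm' a13)
      · exact hadjYT s2 s1 hT2 hT1 (antiAdj_symm' a12)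
    · by_cases hT2 : s2 ∈ (A1 ∪ B1) ∪ (A2 ∪ B2)
      · exact hadjYT s1 s2 hT1 hT2 a12
      · by_cases hT3 : s3 ∈ (A1 ∪ B1) ∪ (A2 ∪ B2)
        · exact hadjYT s1 s3 hT1 hT3 a13
        · have mkadj : ∀ u, u ∉ (A1 ∪ B1) ∪ (A2 ∪ B2) → G.Adj a u := by
            intro u hu
            refine ⟨fun e => hu (by rw [← e]; exact aT), Or.inl ?_⟩
            rw [G.symm a u]
            exact allY u hu a aT
          exact hcf ⟨a, s1, s2, s3, mkadj s1 hT1, mkadj s2 hT2, mkadj s3 hT3, a12, a13, a23⟩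

private lemma aligned_case {V : Type} [Fintype V] {G : Trigraph V} (hconn : G.Connected)
    (hnd : G.NonDegenerate) {A1 B1 A2 B2 : Set V}
    (h1 : G.MaxSquareConnected A1 B1) (h2 : G.MaxSquareConnected A2 B2)
    {x : V} (hx1 : x ∈ A1) (hx2 : x ∈ A2) : A2 = A1 ∧ B2 = B1 := by
  by_cases hQ : (A1 ∩ B2).Nonempty
  · obtain ⟨q, hqA1, hqB2⟩ := hQ
    exact (core_skew hconn hnd h1.1 h2.1 hx1 hx2 hqA1 hqB2).elim
  by_cases hR : (B1 ∩ A2).Nonempty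
  · obtain ⟨r, hrB1, hrA2⟩ := hR
    exact (core_skew hconn hnd h2.1 h1.1 hx2 hx1 hrA2 hrB1).elim
  have d1 : Disjoint A1 B1 := h1.1.1.2.2.1
  have d2 : Disjoint A2 B2 := h2.1.1.2.2.1
  have cl1A := h1.1.1.2.2.2.1
  have cl1B := h1.1.1.2.2.2.2.1
  have cl2A := h2.1.1.2.2.2.1
  have cl2B := h2.1.1.2.2.2.2.1
  have hom1 := h1.1.1.2.2.2.2.2.2
  have hom2 := h2.1.1.2.2.2.2.2.2
  by_cases hS : (B1 ∩ B2).Nonempty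
  · -- merge the two pairs
    obtain ⟨y, hyB1, hyB2⟩ := hS
    have crossA : ∀ u ∈ A1, ∀ v ∈ A2, u ≠ v → G.θ u v = 1 := by
      intro u hu v hv hne
      by_cases huA2 : u ∈ A2
      · exact cl2A huA2 hv hne
      have huX2 : u ∉ A2 ∪ B2 := by
        rintro (h | h)
        · exact huA2 h
        · exact hQ ⟨u, hu, h⟩
      rcases (hom2 u huX2).1 with h | h
      · exact h u rfl v hv
      · exfalso
        have h1' : G.θ u x = -1 := h u rfl x hx2
        have hux : u ≠ x := fun e => huA2 (by rw [e]; exact hx2)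
        have h2' : G.θ u x = 1 := cl1A hu hx1 hux
        omega
    have crossB : ∀ u ∈ B1, ∀ v ∈ B2, u ≠ v → G.θ u v = 1 := by
      intro u hu v hv hne
      by_cases huB2 : u ∈ B2
      · exact cl2B huB2 hv hne
      have huX2 : u ∉ A2 ∪ B2 := by
        rintro (h | h)
        · exact hR ⟨u, hu, h⟩
        · exact huB2 h
      rcases (hom2 u huX2).2 with h | h
      · exact h u rfl v hv
      · exfalso
        have h1' : G.θ u y = -1 := h u rfl y hyB2
        have huy : u ≠ y := fun e => huB2 (by rw [e]; exact hyB2)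
        have h2' : G.θ u y = 1 := cl1B hu hyB1 huy
        omega
    have clA : G.IsStrongClique (A1 ∪ A2) := by
      intro u hu v hv hne
      rcases hu with hu | hu <;> rcases hv with hv | hv
      · exact cl1A hu hv hne
      · exact crossA u hu v hv hne
      · show G.θ u v = 1
        rw [G.symm u v]
        exact crossA v hv u hu hne.symm
      · exact cl2A hu hv hne
    have clB : G.IsStrongClique (B1 ∪ B2) := by
      intro u hu v hv hne
      rcases hu with hu | hu <;> rcases hv with hv | hv
      · exact cl1B hu hv hne
      · exact crossB u hu v hv hne
      · show G.θ u v = 1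
        rw [G.symm u v]
        exact crossB v hv u hu hne.symm
      · exact cl2B hu hv hne
    have hdisj : Disjoint (A1 ∪ A2) (B1 ∪ B2) := by
      rw [Set.disjoint_left]
      rintro u (hu | hu) (hv | hv)
      · exact Set.disjoint_left.1 d1 hu hv
      · exact hQ ⟨u, hu, hv⟩
      · exact hR ⟨u, hv, hu⟩
      · exact Set.disjoint_left.1 d2 hu hv
    have hposc : G.HPOSC (A1 ∪ A2) (B1 ∪ B2) := by
      refine ⟨⟨x, Or.inl hx1⟩, ⟨y, Or.inl hyB1⟩, hdisj, clA, clB, ?_, ?_⟩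
      · rintro ⟨a0, b0, hA, hB⟩
        apply h1.1.1.2.2.2.2.2.1
        refine ⟨a0, b0, ?_, ?_⟩
        · exact (h1.1.1.1.subset_singleton_iff).1 (hA ▸ Set.subset_union_left)
        · exact (h1.1.1.2.1.subset_singleton_iff).1 (hB ▸ Set.subset_union_left)
      · intro v hv
        have hvX1 : v ∉ A1 ∪ B1 := by
          rintro (h | h)
          · exact hv (Or.inl (Or.inl h))
          · exact hv (Or.inr (Or.inl h))
        have hvX2 : v ∉ A2 ∪ B2 := by
          rintro (h | h)
          · exact hv (Or.inl (Or.inr h))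
          · exact hv (Or.inr (Or.inr h))
        obtain ⟨p1A, p1B⟩ := hom1 v hvX1
        obtain ⟨p2A, p2B⟩ := hom2 v hvX2
        constructor
        · rcases p1A with h | h
          · rcases p2A with h' | h'
            · left
              rintro u hu w (hw | hw)
              · exact h u hu w hw
              · exact h' u hu w hw
            · exfalso
              have e1 : G.θ v x = 1 := h v rfl x hx1
              have e2 : G.θ v x = -1 := h' v rfl x hx2
              omega
          · rcases p2A with h' | h'
            · exfalso
              have e1 : G.θ v x = -1 := h v rfl x hx1
              have e2 : G.θ v x = 1 := h' v rfl x hx2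
              omega
            · right
              rintro u hu w (hw | hw)
              · exact h u hu w hw
              · exact h' u hu w hw
        · rcases p1B with h | h
          · rcases p2B with h' | h'
            · left
              rintro u hu w (hw | hw)
              · exact h u hu w hw
              · exact h' u hu w hw
            · exfalso
              have e1 : G.θ v y = 1 := h v rfl y hyB1
              have e2 : G.θ v y = -1 := h' v rfl y hyB2
              omega
          · rcases p2B with h' | h'
            · exfalso
              have e1 : G.θ v y = -1 := h v rfl y hyB1
              have e2 : G.θ v y = 1 := h' v rfl y hyB2
              omega
            · right
              rintro u hu w (hw | hw)
              · exact h u hu w hw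
              · exact h' u hu w hw
    have hsc : G.SquareConnected (A1 ∪ A2) (B1 ∪ B2) := by
      refine ⟨hposc, ?_, ?_⟩
      · intro C' C'' hne' hne'' hun hdis
        by_cases hA1' : (A1 ∩ C').Nonempty ∧ (A1 ∩ C'').Nonempty
        · have hu : (A1 ∩ C') ∪ (A1 ∩ C'') = A1 := by
            rw [← Set.inter_union_distrib_left, hun]
            exact Set.inter_eq_self_of_subset_left Set.subset_union_left
          have hd : Disjoint (A1 ∩ C') (A1 ∩ C'') :=
            hdis.mono Set.inter_subset_right Set.inter_subset_right
          exact sm_mono (h1.1.2.1 (A1 ∩ C') (A1 ∩ C'') hA1'.1 hA1'.2 hu hd)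
            (Set.union_subset_union Set.subset_union_left Set.subset_union_left)
            Set.inter_subset_right Set.inter_subset_right
        by_cases hA2' : (A2 ∩ C').Nonempty ∧ (A2 ∩ C'').Nonempty
        · have hu : (A2 ∩ C') ∪ (A2 ∩ C'') = A2 := by
            rw [← Set.inter_union_distrib_left, hun]
            exact Set.inter_eq_self_of_subset_left Set.subset_union_right
          have hd : Disjoint (A2 ∩ C') (A2 ∩ C'') :=
            hdis.mono Set.inter_subset_right Set.inter_subset_right
          exact sm_mono (h2.1.2.1 (A2 ∩ C') (A2 ∩ C'') hA2'.1 hA2'.2 hu hd)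
            (Set.union_subset_union Set.subset_union_right Set.subset_union_right)
            Set.inter_subset_right Set.inter_subset_right
        · exfalso
          rw [not_and_or] at hA1' hA2'
          have hxC : x ∈ C' ∪ C'' := by rw [hun]; exact Or.inl hx1
          obtain ⟨u'', hu''⟩ := hne''
          obtain ⟨u', hu'⟩ := hne'
          rcases hxC with hx' | hx'
          · rcases (show u'' ∈ A1 ∪ A2 by rw [← hun]; exact Or.inr hu'') with h | h
            · rcases hA1' with hh | hh
              · exact hh ⟨x, hx1, hx'⟩
              · exact hh ⟨u'', h, hu''⟩
            · rcases hA2' with hh | hh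
              · exact hh ⟨x, hx2, hx'⟩
              · exact hh ⟨u'', h, hu''⟩
          · rcases (show u' ∈ A1 ∪ A2 by rw [← hun]; exact Or.inl hu') with h | h
            · rcases hA1' with hh | hh
              · exact hh ⟨u', h, hu'⟩
              · exact hh ⟨x, hx1, hx'⟩
            · rcases hA2' with hh | hh
              · exact hh ⟨u', h, hu'⟩
              · exact hh ⟨x, hx2, hx'⟩
      · intro C' C'' hne' hne'' hun hdis
        by_cases hB1' : (B1 ∩ C').Nonempty ∧ (B1 ∩ C'').Nonempty
        · have hu : (B1 ∩ C') ∪ (B1 ∩ C'') = B1 := by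
            rw [← Set.inter_union_distrib_left, hun]
            exact Set.inter_eq_self_of_subset_left Set.subset_union_left
          have hd : Disjoint (B1 ∩ C') (B1 ∩ C'') :=
            hdis.mono Set.inter_subset_right Set.inter_subset_right
          exact sm_mono (h1.1.2.2 (B1 ∩ C') (B1 ∩ C'') hB1'.1 hB1'.2 hu hd)
            (Set.union_subset_union Set.subset_union_left Set.subset_union_left)
            Set.inter_subset_right Set.inter_subset_right
        by_cases hB2' : (B2 ∩ C').Nonempty ∧ (B2 ∩ C'').Nonempty
        · have hu : (B2 ∩ C') ∪ (B2 ∩ C'') = B2 := by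
            rw [← Set.inter_union_distrib_left, hun]
            exact Set.inter_eq_self_of_subset_left Set.subset_union_right
          have hd : Disjoint (B2 ∩ C') (B2 ∩ C'') :=
            hdis.mono Set.inter_subset_right Set.inter_subset_right
          exact sm_mono (h2.1.2.2 (B2 ∩ C') (B2 ∩ C'') hB2'.1 hB2'.2 hu hd)
            (Set.union_subset_union Set.subset_union_right Set.subset_union_right)
            Set.inter_subset_right Set.inter_subset_right
        · exfalso
          rw [not_and_or] at hB1' hB2'
          have hyC : y ∈ C' ∪ C'' := by rw [hun]; exact Or.inl hyB1
          obtain ⟨u'', hu''⟩ := hne''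
          obtain ⟨u', hu'⟩ := hne'
          rcases hyC with hy' | hy'
          · rcases (show u'' ∈ B1 ∪ B2 by rw [← hun]; exact Or.inr hu'') with h | h
            · rcases hB1' with hh | hh
              · exact hh ⟨y, hyB1, hy'⟩
              · exact hh ⟨u'', h, hu''⟩
            · rcases hB2' with hh | hh
              · exact hh ⟨y, hyB2, hy'⟩
              · exact hh ⟨u'', h, hu''⟩
          · rcases (show u' ∈ B1 ∪ B2 by rw [← hun]; exact Or.inl hu') with h | h
            · rcases hB1' with hh | hh
              · exact hh ⟨u', h, hu'⟩
              · exact hh ⟨y, hyB1, hy'⟩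
            · rcases hB2' with hh | hh
              · exact hh ⟨u', h, hu'⟩
              · exact hh ⟨y, hyB2, hy'⟩
    obtain ⟨e1A, e1B⟩ :=
      h1.2 (A1 ∪ A2) (B1 ∪ B2) hsc Set.subset_union_left Set.subset_union_left
    obtain ⟨e2A, e2B⟩ :=
      h2.2 (A1 ∪ A2) (B1 ∪ B2) hsc Set.subset_union_right Set.subset_union_right
    exact ⟨e2A.symm.trans e1A, e2B.symm.trans e1B⟩
  · -- B1 ∩ B2 = ∅ is impossible
    exfalso
    have hB1out : ∀ b ∈ B1, b ∉ A2 ∪ B2 := by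
      rintro b hb (h | h)
      · exact hR ⟨b, hb, h⟩
      · exact hS ⟨b, hb, h⟩
    obtain ⟨⟨b, hbB1, hxb⟩, ⟨b', hb'B1, hxb'⟩⟩ := sc_mixed h1.1 hx1
    have hbanti : ∀ w ∈ A2, G.θ b w = -1 := by
      rcases (hom2 b (hB1out b hbB1)).1 with h | h
      · exfalso
        have h1' : G.θ b x = 1 := h b rfl x hx2
        have hs := G.symm x b
        rcases hxb.2 with h' | h' <;> omega
      · exact fun w hw => h b rfl w hw
    have hb'comp : ∀ w ∈ A2, G.θ b' w = 1 := by
      rcases (hom2 b' (hB1out b' hb'B1)).1 with h | h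
      · exact fun w hw => h b' rfl w hw
      · exfalso
        have h1' : G.θ b' x = -1 := h b' rfl x hx2
        have hs := G.symm x b'
        rcases hxb'.2 with h' | h' <;> omega
    have hA2sub : A2 ⊆ A1 := by
      intro e he
      have heX1 : e ∈ A1 ∪ B1 := by
        by_contra hout
        rcases (hom1 e hout).2 with h | h
        · have h1' : G.θ e b = 1 := h e rfl b hbB1
          have h2' := hbanti e he
          have hs := G.symm b e
          omega
        · have h1' : G.θ e b' = -1 := h e rfl b' hb'B1
          have h2' := hb'comp e he
          have hs := G.symm b' e
          omega
      rcases heX1 with h | h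
      · exact h
      · exact (hR ⟨e, h, he⟩).elim
    obtain ⟨b2, hb2B2⟩ := h2.1.1.2.1
    have hb2X1 : b2 ∉ A1 ∪ B1 := by
      rintro (h | h)
      · exact hQ ⟨b2, h, hb2B2⟩
      · exact hS ⟨b2, h, hb2B2⟩
    obtain ⟨⟨al, halA2, hanti⟩, ⟨al', hal'A2, hadj⟩⟩ := sc_mixed (sc_swap h2.1) hb2B2
    rcases (hom1 b2 hb2X1).1 with h | h
    · have h1' : G.θ b2 al = 1 := h b2 rfl al (hA2sub halA2)
      rcases hanti.2 with h' | h' <;> omega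
    · have h1' : G.θ b2 al' = -1 := h b2 rfl al' (hA2sub hal'A2)
      rcases hadj.2 with h' | h' <;> omega

end AuxTrigraphProof
/-- In a connected non-degenerate trigraph, two inclusion-maximal
square-connected homogeneous pairs of strong cliques are equal, equal after swapping the
parts, or disjoint. -/
theorem maximal_squareConnected_disjoint {V : Type} [Fintype V] (G : Trigraph V)
    (hconn : G.Connected) (hnd : G.NonDegenerate)
    (A1 B1 A2 B2 : Set V)
    (h1 : G.MaxSquareConnected A1 B1) (h2 : G.MaxSquareConnected A2 B2) :
    (A2 = A1 ∧ B2 = B1) ∨ (A2 = B1 ∧ B2 = A1) ∨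
      Disjoint (A1 ∪ B1) (A2 ∪ B2) := by
  by_cases hdis : Disjoint (A1 ∪ B1) (A2 ∪ B2)
  · exact Or.inr (Or.inr hdis)
  rw [Set.not_disjoint_iff] at hdis
  obtain ⟨x, hx1, hx2⟩ := hdis
  rcases hx1 with hx1 | hx1 <;> rcases hx2 with hx2 | hx2
  · exact Or.inl (aligned_case hconn hnd h1 h2 hx1 hx2)
  · obtain ⟨hA, hB⟩ := aligned_case hconn hnd h1 (max_swap h2) hx1 hx2
    exact Or.inr (Or.inl ⟨hB, hA⟩)
  · obtain ⟨hA, hB⟩ := aligned_case hconn hnd (max_swap h1) h2 hx1 hx2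
    exact Or.inr (Or.inl ⟨hA, hB⟩)
  · obtain ⟨hA, hB⟩ := aligned_case hconn hnd (max_swap h1) (max_swap h2) hx1 hx2
    exact Or.inl ⟨hB, hA⟩
end
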